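/- arXiv:2405.06003 — 10 statements merged into one kernel-verified Lean document; each statement's English description precedes it below -/
import Mathlib

section
/- Let n ≥ 1, let a, b ∈ ℝⁿ, and let ε ≥ 0 be such that for every i ∈ [n], b_i − a_i ∈ {0, ε}. Let P = softmax(a) and Q = softmax(b). Then H²(P, Q) ≤ (exp(ε/4) − 1)² / (1 + exp(ε/2)). -/
open Real Finset

lemma softmax_hellinger_aux (d s t : ℝ) (hd1 : 1 ≤ d) (hs0 : 0 ≤ s) (ht0 : 0 ≤ t)
    (hpos : 0 < s + t) :
    (1/2) * (2 - 2 * ((t + d^2*s) / (Real.sqrt (s+t) * Real.sqrt (t + d^4*s))))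
      ≤ (d-1)^2/(1+d^2) := by
  have hd0 : 0 < d := lt_of_lt_of_le one_pos hd1
  have h14 : (1:ℝ) ≤ d^4 := one_le_pow₀ hd1
  have hB : 0 < t + d^4 * s := by
    nlinarith [mul_nonneg (by linarith : (0:ℝ) ≤ d^4 - 1) hs0]
  have hAB : Real.sqrt (s+t) * Real.sqrt (t + d^4*s) = Real.sqrt ((s+t)*(t+d^4*s)) :=
    (Real.sqrt_mul hpos.le _).symm
  rw [hAB]
  have hS : 0 < Real.sqrt ((s+t)*(t+d^4*s)) := Real.sqrt_pos.mpr (by positivity)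
  have key : 2*d*Real.sqrt ((s+t)*(t+d^4*s)) ≤ (1+d^2)*(t+d^2*s) := by
    have h := Real.sq_sqrt (show (0:ℝ) ≤ (s+t)*(t+d^4*s) by positivity)
    have hsq : (2*d*Real.sqrt ((s+t)*(t+d^4*s)))^2 ≤ ((1+d^2)*(t+d^2*s))^2 := by
      have expand : (2*d*Real.sqrt ((s+t)*(t+d^4*s)))^2
          = 4*d^2*((s+t)*(t+d^4*s)) := by
        rw [mul_pow, mul_pow, h]; ring
      have id1 : ((1+d^2)*(t+d^2*s))^2 - 4*d^2*((s+t)*(t+d^4*s))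
          = ((d^2-1)*(t-d^2*s))^2 := by ring
      have := sq_nonneg ((d^2-1)*(t-d^2*s))
      rw [expand]; linarith
    have h1 : 0 ≤ 2*d*Real.sqrt ((s+t)*(t+d^4*s)) := by positivity
    have h2 : 0 ≤ (1+d^2)*(t+d^2*s) := by positivity
    have := Real.sqrt_le_sqrt hsq
    rwa [Real.sqrt_sq h1, Real.sqrt_sq h2] at this
  have hfrac : 2*d/(1+d^2) ≤ (t+d^2*s)/Real.sqrt ((s+t)*(t+d^4*s)) := by
    rw [div_le_div_iff₀ (by positivity) hS]; linarith
  have hrhs : (d-1)^2/(1+d^2) = 1 - 2*d/(1+d^2) := by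
    field_simp; ring
  rw [hrhs]; linarith

/-- Squared Hellinger distance bound for softmax distributions whose parameters
differ coordinatewise by either `0` or `ε`. -/
theorem softmax_hellinger_sq_le_of_diff_zero_or_eps
    (n : ℕ) (hn : 1 ≤ n) (a b : Fin n → ℝ) (ε : ℝ) (hε : 0 ≤ ε)
    (hab : ∀ i, b i - a i = 0 ∨ b i - a i = ε)
    (P Q : Fin n → ℝ)
    (hP : ∀ i, P i = Real.exp (a i) / ∑ j, Real.exp (a j))
    (hQ : ∀ i, Q i = Real.exp (b i) / ∑ j, Real.exp (b j)) :
    (1 / 2) * ∑ i, (Real.sqrt (P i) - Real.sqrt (Q i)) ^ 2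
      ≤ (Real.exp (ε / 4) - 1) ^ 2 / (1 + Real.exp (ε / 2)) := by
  have hne : Nonempty (Fin n) := Fin.pos_iff_nonempty.mp hn
  set d := Real.exp (ε / 4) with hd
  have hd0 : 0 < d := Real.exp_pos _
  have hd1 : (1 : ℝ) ≤ d := by
    rw [hd, show (1:ℝ) = Real.exp 0 by simp]
    exact Real.exp_le_exp.2 (by linarith)
  have hd2 : d ^ 2 = Real.exp (ε / 2) := by
    rw [hd, pow_two, ← Real.exp_add]; congr 1; ring
  have hd4 : d ^ 4 = Real.exp ε := by
    rw [show (4:ℕ) = 2 * 2 by norm_num, pow_mul, hd2, pow_two, ← Real.exp_add]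
    congr 1; ring
  set A := ∑ j, Real.exp (a j) with hA
  set B := ∑ j, Real.exp (b j) with hB
  have hApos : 0 < A := Finset.sum_pos (fun i _ => Real.exp_pos _) Finset.univ_nonempty
  have hBpos : 0 < B := Finset.sum_pos (fun i _ => Real.exp_pos _) Finset.univ_nonempty
  set s := ∑ i ∈ Finset.univ.filter (fun i => b i - a i = ε), Real.exp (a i) with hs
  set t := ∑ i ∈ Finset.univ.filter (fun i => ¬ (b i - a i = ε)), Real.exp (a i) with ht
  have hs0 : 0 ≤ s := Finset.sum_nonneg fun i _ => (Real.exp_pos _).le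
  have ht0 : 0 ≤ t := Finset.sum_nonneg fun i _ => (Real.exp_pos _).le
  have hAst : A = s + t := by
    rw [hA, hs, ht, Finset.sum_filter_add_sum_filter_not]
  have hBst : B = t + d ^ 4 * s := by
    rw [hB, ← Finset.sum_filter_add_sum_filter_not Finset.univ (fun i => b i - a i = ε)]
    have h1 : ∑ i ∈ Finset.univ.filter (fun i => b i - a i = ε), Real.exp (b i)
        = d ^ 4 * s := by
      rw [hs, Finset.mul_sum]
      refine Finset.sum_congr rfl fun i hi => ?_
      have := (Finset.mem_filter.mp hi).2
      have hbi : b i = a i + ε := by linarith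
      rw [hbi, Real.exp_add, hd4]; ring
    have h2 : ∑ i ∈ Finset.univ.filter (fun i => ¬ (b i - a i = ε)), Real.exp (b i) = t := by
      rw [ht]
      refine Finset.sum_congr rfl fun i hi => ?_
      have hni := (Finset.mem_filter.mp hi).2
      have h0 := (hab i).resolve_right hni
      have hbi : b i = a i := by linarith
      rw [hbi]
    rw [h1, h2]; ring
  set M := ∑ i, Real.exp ((a i + b i) / 2) with hM
  have hMst : M = t + d ^ 2 * s := by
    rw [hM, ← Finset.sum_filter_add_sum_filter_not Finset.univ (fun i => b i - a i = ε)]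
    have h1 : ∑ i ∈ Finset.univ.filter (fun i => b i - a i = ε),
        Real.exp ((a i + b i) / 2) = d ^ 2 * s := by
      rw [hs, Finset.mul_sum]
      refine Finset.sum_congr rfl fun i hi => ?_
      have := (Finset.mem_filter.mp hi).2
      have hbi : b i = a i + ε := by linarith
      rw [hbi, show (a i + (a i + ε)) / 2 = a i + ε / 2 by ring, Real.exp_add, hd2]; ring
    have h2 : ∑ i ∈ Finset.univ.filter (fun i => ¬ (b i - a i = ε)),
        Real.exp ((a i + b i) / 2) = t := by
      rw [ht]
      refine Finset.sum_congr rfl fun i hi => ?_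
      have hni := (Finset.mem_filter.mp hi).2
      have h0 := (hab i).resolve_right hni
      have hbi : b i = a i := by linarith
      rw [hbi, show (a i + a i) / 2 = a i by ring]
    rw [h1, h2]; ring
  have hterm : ∀ i, (Real.sqrt (P i) - Real.sqrt (Q i)) ^ 2
      = P i + Q i - 2 * (Real.exp ((a i + b i) / 2) / (Real.sqrt A * Real.sqrt B)) := by
    intro i
    have hPi : Real.sqrt (P i) = Real.exp (a i / 2) / Real.sqrt A := by
      rw [hP i, Real.sqrt_div (Real.exp_pos _).le, Real.exp_half]
    have hQi : Real.sqrt (Q i) = Real.exp (b i / 2) / Real.sqrt B := by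
      rw [hQ i, Real.sqrt_div (Real.exp_pos _).le, Real.exp_half]
    have hP0 : 0 ≤ P i := by rw [hP i]; positivity
    have hQ0 : 0 ≤ Q i := by rw [hQ i]; positivity
    have e1 : Real.sqrt (P i) ^ 2 = P i := Real.sq_sqrt hP0
    have e2 : Real.sqrt (Q i) ^ 2 = Q i := Real.sq_sqrt hQ0
    have e3 : Real.sqrt (P i) * Real.sqrt (Q i)
        = Real.exp ((a i + b i) / 2) / (Real.sqrt A * Real.sqrt B) := by
      rw [hPi, hQi, div_mul_div_comm, ← Real.exp_add]
      congr 2; ring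
    have expand : (Real.sqrt (P i) - Real.sqrt (Q i)) ^ 2
        = Real.sqrt (P i) ^ 2 + Real.sqrt (Q i) ^ 2
          - 2 * (Real.sqrt (P i) * Real.sqrt (Q i)) := by ring
    rw [expand, e1, e2, e3]
  have hsum : ∑ i, (Real.sqrt (P i) - Real.sqrt (Q i)) ^ 2
      = 2 - 2 * (M / (Real.sqrt A * Real.sqrt B)) := by
    have hPsum : ∑ i, P i = 1 := by
      rw [Finset.sum_congr rfl fun i _ => hP i, ← Finset.sum_div, ← hA, div_self hApos.ne']
    have hQsum : ∑ i, Q i = 1 := by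
      rw [Finset.sum_congr rfl fun i _ => hQ i, ← Finset.sum_div, ← hB, div_self hBpos.ne']
    rw [Finset.sum_congr rfl fun i _ => hterm i]
    rw [Finset.sum_sub_distrib, Finset.sum_add_distrib, hPsum, hQsum,
      ← Finset.mul_sum, ← Finset.sum_div, ← hM]
    ring
  rw [hsum, hAst, hBst, hMst, ← hd2]
  exact softmax_hellinger_aux d s t hd1 hs0 ht0 (hAst ▸ hApos)
end

section
/- Let n ≥ 1, let a, b ∈ ℝⁿ, and let ε ≥ 0 be such that for every i ∈ [n], b_i − a_i ∈ {0, ε}. Let P = softmax(a) and Q = softmax(b). Then TV(P, Q) ≤ tanh(ε/4). -/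
open Real Finset


theorem softmax_tv_aux1 (x s t E : ℝ) (hA : s + t ≠ 0) (hB : E * s + t ≠ 0) :
    x / (s + t) - x * E / (E * s + t)
      = -(x * (t * ((E - 1) / ((s + t) * (E * s + t))))) := by
  rw [div_sub_div _ _ hA hB, mul_div_assoc', mul_div_assoc', ← neg_div]
  congr 1
  ring

theorem softmax_tv_aux2 (x s t E : ℝ) (hA : s + t ≠ 0) (hB : E * s + t ≠ 0) :
    x / (s + t) - x / (E * s + t)
      = x * (s * ((E - 1) / ((s + t) * (E * s + t)))) := by
  rw [div_sub_div _ _ hA hB, mul_div_assoc', mul_div_assoc']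
  congr 1
  ring

/-- Total variation distance bound for softmax distributions whose parameters
differ coordinatewise by either `0` or `ε`. -/
theorem softmax_tv_le_of_diff_zero_or_eps
    (n : ℕ) (hn : 1 ≤ n) (a b : Fin n → ℝ) (ε : ℝ) (hε : 0 ≤ ε)
    (hab : ∀ i, b i - a i = 0 ∨ b i - a i = ε)
    (P Q : Fin n → ℝ)
    (hP : ∀ i, P i = Real.exp (a i) / ∑ j, Real.exp (a j))
    (hQ : ∀ i, Q i = Real.exp (b i) / ∑ j, Real.exp (b j)) :
    (1 / 2) * ∑ i, |P i - Q i| ≤ Real.tanh (ε / 4) := by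
  classical
  set S : Finset (Fin n) := Finset.univ.filter (fun i => b i - a i = ε) with hSdef
  set s := ∑ i ∈ S, Real.exp (a i) with hs
  set t := ∑ i ∈ Sᶜ, Real.exp (a i) with ht
  have hbS : ∀ i ∈ S, b i = a i + ε := by
    intro i hi
    have := (Finset.mem_filter.mp hi).2
    linarith
  have hbSc : ∀ i ∈ Sᶜ, b i = a i := by
    intro i hi
    rcases hab i with h | h
    · linarith
    · have hiS : i ∈ S := by
        rw [hSdef]
        exact Finset.mem_filter.mpr ⟨Finset.mem_univ _, h⟩
      exact absurd hiS (Finset.mem_compl.mp hi)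
  have hs0 : 0 ≤ s := Finset.sum_nonneg fun i _ => (Real.exp_pos _).le
  have ht0 : 0 ≤ t := Finset.sum_nonneg fun i _ => (Real.exp_pos _).le
  have hA : ∑ j, Real.exp (a j) = s + t := (Finset.sum_add_sum_compl S _).symm
  have hApos : 0 < s + t := by
    rw [← hA]
    exact Finset.sum_pos (fun i _ => Real.exp_pos _)
      (Finset.univ_nonempty_iff.mpr ⟨⟨0, hn⟩⟩)
  have hE1 : 1 ≤ Real.exp ε := Real.one_le_exp hε
  have hBpos : 0 < Real.exp ε * s + t := by
    nlinarith [mul_nonneg (sub_nonneg.mpr hE1) hs0]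
  have hB : ∑ j, Real.exp (b j) = Real.exp ε * s + t := by
    rw [← Finset.sum_add_sum_compl S (fun j => Real.exp (b j))]
    congr 1
    · rw [hs, Finset.mul_sum]
      exact Finset.sum_congr rfl fun i hi => by rw [hbS i hi, Real.exp_add]; ring
    · exact Finset.sum_congr rfl fun i hi => by rw [hbSc i hi]
  have hcnonneg : 0 ≤ (Real.exp ε - 1) / ((s + t) * (Real.exp ε * s + t)) := by
    apply div_nonneg (by linarith) (by positivity)
  have hPQ_S : ∀ i ∈ S, |P i - Q i|
      = Real.exp (a i) * (t * ((Real.exp ε - 1) / ((s + t) * (Real.exp ε * s + t)))) := by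
    intro i hi
    have heq : P i - Q i
        = -(Real.exp (a i) * (t * ((Real.exp ε - 1) / ((s + t) * (Real.exp ε * s + t))))) := by
      rw [hP, hQ, hA, hB, hbS i hi, Real.exp_add]
      exact softmax_tv_aux1 _ _ _ _ (ne_of_gt hApos) (ne_of_gt hBpos)
    rw [heq, abs_neg, abs_of_nonneg]
    exact mul_nonneg (Real.exp_pos _).le (mul_nonneg ht0 hcnonneg)
  have hPQ_Sc : ∀ i ∈ Sᶜ, |P i - Q i|
      = Real.exp (a i) * (s * ((Real.exp ε - 1) / ((s + t) * (Real.exp ε * s + t)))) := by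
    intro i hi
    have heq : P i - Q i
        = Real.exp (a i) * (s * ((Real.exp ε - 1) / ((s + t) * (Real.exp ε * s + t)))) := by
      rw [hP, hQ, hA, hB, hbSc i hi]
      exact softmax_tv_aux2 _ _ _ _ (ne_of_gt hApos) (ne_of_gt hBpos)
    rw [heq, abs_of_nonneg]
    exact mul_nonneg (Real.exp_pos _).le (mul_nonneg hs0 hcnonneg)
  have hsum : ∑ i, |P i - Q i|
      = 2 * (s * t * ((Real.exp ε - 1) / ((s + t) * (Real.exp ε * s + t)))) := by
    rw [← Finset.sum_add_sum_compl S (fun i => |P i - Q i|),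
      Finset.sum_congr rfl hPQ_S, Finset.sum_congr rfl hPQ_Sc,
      ← Finset.sum_mul, ← Finset.sum_mul, ← hs, ← ht]
    ring
  rw [hsum]
  have htanh : Real.tanh (ε / 4) = (Real.exp (ε / 2) - 1) / (Real.exp (ε / 2) + 1) := by
    rw [Real.tanh_eq_sinh_div_cosh, Real.sinh_eq, Real.cosh_eq]
    have h1 : Real.exp (ε / 2) = Real.exp (ε / 4) * Real.exp (ε / 4) := by
      rw [← Real.exp_add]; congr 1; ring
    have h2 : Real.exp (-(ε / 4)) = (Real.exp (ε / 4))⁻¹ := Real.exp_neg _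
    have hx : (0:ℝ) < Real.exp (ε / 4) := Real.exp_pos _
    rw [h1, h2]
    have hd : (0:ℝ) < Real.exp (ε / 4) * Real.exp (ε / 4) + 1 := by positivity
    field_simp
  rw [htanh]
  set v := Real.exp (ε / 2) with hv
  have hv1 : 1 ≤ v := Real.one_le_exp (by linarith)
  have hEv : Real.exp ε = v * v := by rw [hv, ← Real.exp_add]; congr 1; ring
  rw [hEv] at hBpos ⊢
  have hlhs : (1 / 2 : ℝ) * (2 * (s * t * ((v * v - 1) / ((s + t) * (v * v * s + t)))))
      = s * t * (v * v - 1) / ((s + t) * (v * v * s + t)) := by ring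
  rw [hlhs, div_le_div_iff₀ (mul_pos hApos hBpos) (by linarith)]
  nlinarith [mul_nonneg (sub_nonneg.mpr hv1) (sq_nonneg (v * s - t)), hs0, ht0,
    mul_nonneg hs0 ht0]
end

section
/- Let n ≥ 1, let a, b ∈ ℝⁿ, and let ε ≥ 0 be such that ‖a − b‖_∞ ≤ ε. Let P = softmax(a) and Q = softmax(b). Then TV(P, Q) ≤ ε/2. -/
open Real Finset

lemma key1 (r : ℝ) (hr : 0 ≤ r) : Real.exp r - 1 ≤ r / 2 * (Real.exp r + 1) := by
  have hneg : ∀ x : ℝ, (1 - x) * Real.exp x ≤ 1 := by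
    intro x
    have h1 : 1 - x ≤ Real.exp (-x) := by linarith [Real.add_one_le_exp (-x)]
    calc (1 - x) * Real.exp x ≤ Real.exp (-x) * Real.exp x :=
          mul_le_mul_of_nonneg_right h1 (Real.exp_pos x).le
      _ = 1 := by rw [← Real.exp_add]; simp
  set f : ℝ → ℝ := fun x => x / 2 * (Real.exp x + 1) - (Real.exp x - 1) with hf
  have hd : ∀ x : ℝ, HasDerivAt f (1/2 * (Real.exp x + 1) + x/2 * Real.exp x - Real.exp x) x := by
    intro x
    have h1 : HasDerivAt (fun x : ℝ => x / 2) (1/2) x := (hasDerivAt_id x).div_const 2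
    have h2 : HasDerivAt (fun x : ℝ => Real.exp x + 1) (Real.exp x) x :=
      (Real.hasDerivAt_exp x).add_const 1
    have h4 : HasDerivAt (fun x : ℝ => Real.exp x - 1) (Real.exp x) x :=
      (Real.hasDerivAt_exp x).sub_const 1
    exact (h1.mul h2).sub h4
  have hmono : Monotone f := by
    apply monotone_of_deriv_nonneg
    · exact fun x => (hd x).differentiableAt
    · intro x
      rw [(hd x).deriv]
      nlinarith [hneg x, (Real.exp_pos x).le]
  have h0 := hmono hr
  simp only [hf] at h0
  simp at h0
  linarith

lemma key2 (u v : ℝ) (hu : 0 ≤ u) (hv : 0 ≤ v) :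
    (Real.exp u - 1) * (Real.exp v - 1) ≤ (u + v) / 4 * (Real.exp (u + v) - 1) := by
  have h1 : Real.exp (u/2) * Real.exp (u/2) = Real.exp u := by
    rw [← Real.exp_add]; ring_nf
  have h2 : Real.exp (v/2) * Real.exp (v/2) = Real.exp v := by
    rw [← Real.exp_add]; ring_nf
  have h3 : Real.exp (u/2) * Real.exp (v/2) = Real.exp ((u+v)/2) := by
    rw [← Real.exp_add]; ring_nf
  have h4 : Real.exp ((u+v)/2) * Real.exp ((u+v)/2) = Real.exp (u+v) := by
    rw [← Real.exp_add]; ring_nf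
  -- step 1 : (e^u-1)(e^v-1) ≤ (e^{(u+v)/2}-1)^2
  have step1 : (Real.exp u - 1) * (Real.exp v - 1) ≤ (Real.exp ((u+v)/2) - 1)^2 := by
    nlinarith [sq_nonneg (Real.exp (u/2) - Real.exp (v/2))]
  -- step 2 : (e^r-1)^2 ≤ (r/2)(e^{2r}-1), r = (u+v)/2
  have hr : 0 ≤ (u+v)/2 := by linarith
  have hk := key1 ((u+v)/2) hr
  have hge : (1:ℝ) ≤ Real.exp ((u+v)/2) := Real.one_le_exp hr
  nlinarith [mul_le_mul_of_nonneg_right hk (by linarith : (0:ℝ) ≤ Real.exp ((u+v)/2) - 1)]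

lemma combine_bound (T A B Qp Qm ε : ℝ) (hTnn : 0 ≤ T) (hA : 0 ≤ A) (hB : 0 ≤ B)
    (hQp : 0 ≤ Qp) (hQm : 0 ≤ Qm) (h1 : T ≤ A * Qp) (h2 : T ≤ B * Qm)
    (h3 : Qp + Qm ≤ 1) (hAB : A * B ≤ ε / 2 * (A + B)) (hε : 0 ≤ ε) :
    T ≤ ε / 2 := by
  rcases eq_or_lt_of_le (by linarith : (0:ℝ) ≤ A + B) with h | h
  · have hA0 : A = 0 := by linarith
    rw [hA0, zero_mul] at h1
    linarith
  · have g1 : T * A ≤ B * Qm * A := mul_le_mul_of_nonneg_right h2 hA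
    have g2 : T * B ≤ A * Qp * B := mul_le_mul_of_nonneg_right h1 hB
    have g3 : T * (A + B) ≤ A * B * (Qp + Qm) := by nlinarith
    have g4 : A * B * (Qp + Qm) ≤ A * B := by nlinarith [mul_nonneg hA hB]
    have g5 : T * (A + B) ≤ ε / 2 * (A + B) := by linarith
    exact le_of_mul_le_mul_right g5 h

set_option maxHeartbeats 1000000 in
/-- Total variation distance bound for softmax distributions whose parameters
are within `ε` in the `ℓ∞` norm. -/
theorem softmax_tv_le_of_linf_close
    (n : ℕ) (hn : 1 ≤ n) (a b : Fin n → ℝ) (ε : ℝ) (hε : 0 ≤ ε)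
    (hab : ∀ i, |a i - b i| ≤ ε)
    (P Q : Fin n → ℝ)
    (hP : ∀ i, P i = Real.exp (a i) / ∑ j, Real.exp (a j))
    (hQ : ∀ i, Q i = Real.exp (b i) / ∑ j, Real.exp (b j)) :
    (1 / 2) * ∑ i, |P i - Q i| ≤ ε / 2 := by
  have hne : (univ : Finset (Fin n)).Nonempty := ⟨⟨0, hn⟩, mem_univ _⟩
  set Sa := ∑ j, Real.exp (a j) with hSa_def
  set Sb := ∑ j, Real.exp (b j) with hSb_def
  have hSa : 0 < Sa := Finset.sum_pos (fun i _ => Real.exp_pos _) hne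
  have hSb : 0 < Sb := Finset.sum_pos (fun i _ => Real.exp_pos _) hne
  set t := Real.log (Sa / Sb) with ht_def
  have hrat : Real.exp t = Sa / Sb := Real.exp_log (div_pos hSa hSb)
  have hSa_eq : Sa = Real.exp t * Sb := by
    rw [hrat]; field_simp
  have habl : ∀ i, a i - b i ≤ ε := fun i => (abs_le.1 (hab i)).2
  have habr : ∀ i, -ε ≤ a i - b i := fun i => (abs_le.1 (hab i)).1
  have htub : t ≤ ε := by
    rw [ht_def, Real.log_le_iff_le_exp (div_pos hSa hSb), div_le_iff₀ hSb]
    calc Sa = ∑ j, Real.exp (a j) := hSa_def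
      _ ≤ ∑ j, Real.exp ε * Real.exp (b j) := by
          apply Finset.sum_le_sum; intro i _
          rw [← Real.exp_add]
          exact Real.exp_le_exp.2 (by linarith [habl i])
      _ = Real.exp ε * Sb := by rw [← Finset.mul_sum]
  have htlb : -ε ≤ t := by
    rw [ht_def, Real.le_log_iff_exp_le (div_pos hSa hSb), le_div_iff₀ hSb]
    calc Real.exp (-ε) * Sb = ∑ j, Real.exp (-ε) * Real.exp (b j) := by rw [← Finset.mul_sum]
      _ ≤ ∑ j, Real.exp (a j) := by
          apply Finset.sum_le_sum; intro i _
          rw [← Real.exp_add]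
          exact Real.exp_le_exp.2 (by linarith [habr i])
      _ = Sa := hSa_def.symm
  set u := ε - t with hu_def
  set v := ε + t with hv_def
  have hu : 0 ≤ u := by rw [hu_def]; linarith
  have hv : 0 ≤ v := by rw [hv_def]; linarith
  set A := Real.exp u - 1 with hA_def
  set B := 1 - Real.exp (-v) with hB_def
  have hA : 0 ≤ A := by rw [hA_def]; linarith [Real.one_le_exp hu]
  have hB : 0 ≤ B := by
    rw [hB_def]
    have : Real.exp (-v) ≤ 1 := Real.exp_le_one_iff.2 (by linarith)
    linarith
  have hQnn : ∀ i, 0 ≤ Q i := by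
    intro i; rw [hQ i]; exact div_nonneg (Real.exp_pos _).le hSb.le
  have hPQ : ∀ i, P i - Q i = Q i * (Real.exp (a i - b i - t) - 1) := by
    intro i
    rw [hP i, hQ i, hSa_eq]
    have h1 : Real.exp (a i - b i - t) = Real.exp (a i) / (Real.exp (b i) * Real.exp t) := by
      rw [← Real.exp_add, ← Real.exp_sub]; ring_nf
    rw [h1]
    have e1 := Real.exp_pos (b i)
    have e2 := Real.exp_pos t
    field_simp
  have hup : ∀ i, P i - Q i ≤ Q i * A := by
    intro i
    rw [hPQ i]
    apply mul_le_mul_of_nonneg_left _ (hQnn i)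
    rw [hA_def]
    have h : a i - b i - t ≤ u := by rw [hu_def]; linarith [habl i]
    linarith [Real.exp_le_exp.2 h]
  have hdn : ∀ i, Q i - P i ≤ Q i * B := by
    intro i
    have h2 : Q i - P i = Q i * (1 - Real.exp (a i - b i - t)) := by
      have := hPQ i; linarith [hPQ i, mul_sub (Q i) (1:ℝ) (Real.exp (a i - b i - t)),
        mul_sub (Q i) (Real.exp (a i - b i - t)) (1:ℝ)]
    rw [h2]
    apply mul_le_mul_of_nonneg_left _ (hQnn i)
    rw [hB_def]
    have h : -v ≤ a i - b i - t := by rw [hv_def]; linarith [habr i]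
    linarith [Real.exp_le_exp.2 h]
  have hsumP : ∑ i, P i = 1 := by
    rw [Finset.sum_congr rfl (fun i _ => hP i), ← Finset.sum_div]
    exact div_self (ne_of_gt hSa)
  have hsumQ : ∑ i, Q i = 1 := by
    rw [Finset.sum_congr rfl (fun i _ => hQ i), ← Finset.sum_div]
    exact div_self (ne_of_gt hSb)
  set T := ∑ i, max (P i - Q i) 0 with hT_def
  set U := ∑ i, max (Q i - P i) 0 with hU_def
  have hTnn : 0 ≤ T := Finset.sum_nonneg (fun i _ => le_max_right _ _)
  have hTU : T = U := by
    have h1 : T - U = ∑ i, (P i - Q i) := by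
      rw [hT_def, hU_def, ← Finset.sum_sub_distrib]
      apply Finset.sum_congr rfl
      intro i _
      rcases le_total (P i - Q i) 0 with h | h
      · rw [max_eq_right h, max_eq_left (by linarith)]; ring
      · rw [max_eq_left h, max_eq_right (by linarith)]; ring
    have h2 : ∑ i, (P i - Q i) = 0 := by
      rw [Finset.sum_sub_distrib, hsumP, hsumQ]; ring
    linarith [h1, h2]
  have habs : ∑ i, |P i - Q i| = T + U := by
    rw [hT_def, hU_def, ← Finset.sum_add_distrib]
    apply Finset.sum_congr rfl
    intro i _
    rcases le_total (P i - Q i) 0 with h | h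
    · rw [abs_of_nonpos h, max_eq_right h, max_eq_left (by linarith)]; ring
    · rw [abs_of_nonneg h, max_eq_left h, max_eq_right (by linarith)]; ring
  set Sp := univ.filter (fun i => Q i < P i) with hSp_def
  set Sm := univ.filter (fun i => P i < Q i) with hSm_def
  set Qp := ∑ i ∈ Sp, Q i with hQp_def
  set Qm := ∑ i ∈ Sm, Q i with hQm_def
  have hQpnn : 0 ≤ Qp := Finset.sum_nonneg (fun i _ => hQnn i)
  have hQmnn : 0 ≤ Qm := Finset.sum_nonneg (fun i _ => hQnn i)
  have hT1 : T ≤ A * Qp := by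
    have h1 : T = ∑ i ∈ Sp, max (P i - Q i) 0 := by
      rw [hT_def]
      rw [← Finset.sum_filter_add_sum_filter_not univ (fun i => Q i < P i)
        (fun i => max (P i - Q i) 0)]
      have h0 : ∑ i ∈ univ.filter (fun i => ¬ Q i < P i), max (P i - Q i) 0 = 0 := by
        apply Finset.sum_eq_zero
        intro i hi
        simp only [Finset.mem_filter, not_lt] at hi
        exact max_eq_right (by linarith [hi.2])
      rw [h0, add_zero]
    rw [h1, hQp_def, Finset.mul_sum]
    apply Finset.sum_le_sum
    intro i hi
    simp only [hSp_def, Finset.mem_filter] at hi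
    rw [max_eq_left (by linarith [hi.2])]
    calc P i - Q i ≤ Q i * A := hup i
      _ = A * Q i := by ring
  have hT2 : T ≤ B * Qm := by
    rw [hTU]
    have h1 : U = ∑ i ∈ Sm, max (Q i - P i) 0 := by
      rw [hU_def]
      rw [← Finset.sum_filter_add_sum_filter_not univ (fun i => P i < Q i)
        (fun i => max (Q i - P i) 0)]
      have h0 : ∑ i ∈ univ.filter (fun i => ¬ P i < Q i), max (Q i - P i) 0 = 0 := by
        apply Finset.sum_eq_zero
        intro i hi
        simp only [Finset.mem_filter, not_lt] at hi
        exact max_eq_right (by linarith [hi.2])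
      rw [h0, add_zero]
    rw [h1, hQm_def, Finset.mul_sum]
    apply Finset.sum_le_sum
    intro i hi
    simp only [hSm_def, Finset.mem_filter] at hi
    rw [max_eq_left (by linarith [hi.2])]
    calc Q i - P i ≤ Q i * B := hdn i
      _ = B * Q i := by ring
  have hQpm : Qp + Qm ≤ 1 := by
    rw [hQp_def, hQm_def, ← Finset.sum_union]
    · rw [← hsumQ]
      apply Finset.sum_le_sum_of_subset_of_nonneg (Finset.subset_univ _)
      intro i _ _
      exact hQnn i
    · rw [Finset.disjoint_filter]
      intro i _ h1 h2
      exact absurd h2 (not_lt.2 (le_of_lt h1))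
  have hABkey : A * B ≤ ε / 2 * (A + B) := by
    have hK := key2 u v hu hv
    have huv : u + v = 2 * ε := by rw [hu_def, hv_def]; ring
    have h1 : Real.exp (-v) * Real.exp v = 1 := by rw [← Real.exp_add]; simp
    have hBv : B = Real.exp (-v) * (Real.exp v - 1) := by
      rw [hB_def, mul_sub, h1, mul_one]
    have hK2 := mul_le_mul_of_nonneg_left hK (Real.exp_pos (-v)).le
    rw [huv] at hK2
    have h2 : Real.exp (u + v) = Real.exp u * Real.exp v := Real.exp_add u v
    rw [← huv] at hK2
    rw [h2] at hK2
    rw [huv] at hK2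
    have h4 : Real.exp (-v) * (Real.exp u * Real.exp v) = Real.exp u := by
      rw [show Real.exp (-v) * (Real.exp u * Real.exp v)
          = Real.exp u * (Real.exp (-v) * Real.exp v) by ring, h1, mul_one]
    calc A * B = Real.exp (-v) * ((Real.exp u - 1) * (Real.exp v - 1)) := by
          rw [hA_def, hBv]; ring
      _ ≤ Real.exp (-v) * (2 * ε / 4 * (Real.exp u * Real.exp v - 1)) := hK2
      _ = ε / 2 * (Real.exp (-v) * (Real.exp u * Real.exp v) - Real.exp (-v)) := by ring
      _ = ε / 2 * (Real.exp u - Real.exp (-v)) := by rw [h4]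
      _ = ε / 2 * (A + B) := by rw [hA_def, hB_def]; ring
  have hfin : T ≤ ε / 2 :=
    combine_bound T A B Qp Qm ε hTnn hA hB hQpnn hQmnn hT1 hT2 hQpm hABkey hε
  rw [habs, ← hTU]
  linarith
end

section
/- Let n ≥ 1, let a, b ∈ ℝⁿ, and let ε ≥ 0 be such that ‖a − b‖_∞ ≤ ε. Let P = softmax(a) and Q = softmax(b). Then H²(P, Q) ≤ ε². -/
open Real Finset

set_option maxHeartbeats 1000000 in
/-- Squared Hellinger distance bound for softmax distributions whose parameters
are within `ε` in the `ℓ∞` norm. -/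
theorem softmax_hellinger_sq_le_of_linf_close
    (n : ℕ) (hn : 1 ≤ n) (a b : Fin n → ℝ) (ε : ℝ) (hε : 0 ≤ ε)
    (hab : ∀ i, |a i - b i| ≤ ε)
    (P Q : Fin n → ℝ)
    (hP : ∀ i, P i = Real.exp (a i) / ∑ j, Real.exp (a j))
    (hQ : ∀ i, Q i = Real.exp (b i) / ∑ j, Real.exp (b j)) :
    (1 / 2) * ∑ i, (Real.sqrt (P i) - Real.sqrt (Q i)) ^ 2 ≤ ε ^ 2 := by
  have hne : Nonempty (Fin n) := ⟨⟨0, hn⟩⟩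
  set A := ∑ j, Real.exp (a j) with hA
  set B := ∑ j, Real.exp (b j) with hB
  set C := ∑ j, Real.exp ((a j + b j) / 2) with hC
  have hApos : 0 < A := Finset.sum_pos (fun i _ => Real.exp_pos _) univ_nonempty
  have hBpos : 0 < B := Finset.sum_pos (fun i _ => Real.exp_pos _) univ_nonempty
  have hCpos : 0 < C := Finset.sum_pos (fun i _ => Real.exp_pos _) univ_nonempty
  clear_value A B C
  -- pointwise identity for each term
  have hterm : ∀ i, (Real.sqrt (P i) - Real.sqrt (Q i)) ^ 2
      = P i + Q i - 2 * (Real.exp ((a i + b i) / 2) / (Real.sqrt A * Real.sqrt B)) := by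
    intro i
    have hPi : 0 ≤ P i := by
      rw [hP i]; positivity
    have hQi : 0 ≤ Q i := by
      rw [hQ i]; positivity
    have hcross : Real.sqrt (P i) * Real.sqrt (Q i)
        = Real.exp ((a i + b i) / 2) / (Real.sqrt A * Real.sqrt B) := by
      rw [hP i, hQ i, Real.sqrt_div (le_of_lt (Real.exp_pos _)),
        Real.sqrt_div (le_of_lt (Real.exp_pos _)), ← Real.exp_half, ← Real.exp_half,
        div_mul_div_comm, ← Real.exp_add]
      have h2 : a i / 2 + b i / 2 = (a i + b i) / 2 := by ring
      rw [h2]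
    rw [sub_sq, Real.sq_sqrt hPi, Real.sq_sqrt hQi, mul_assoc, hcross]
    ring
  have hsumP : ∑ i, P i = 1 := by
    simp only [hP]; rw [← Finset.sum_div, ← hA, div_self hApos.ne']
  have hsumQ : ∑ i, Q i = 1 := by
    simp only [hQ]; rw [← Finset.sum_div, ← hB, div_self hBpos.ne']
  have hsum : ∑ i, (Real.sqrt (P i) - Real.sqrt (Q i)) ^ 2
      = 2 - 2 * (C / (Real.sqrt A * Real.sqrt B)) := by
    calc ∑ i, (Real.sqrt (P i) - Real.sqrt (Q i)) ^ 2
        = ∑ i, (P i + Q i - 2 * (Real.exp ((a i + b i) / 2) / (Real.sqrt A * Real.sqrt B))) := by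
          exact Finset.sum_congr rfl fun i _ => hterm i
      _ = (∑ i, P i) + (∑ i, Q i)
            - 2 * ((∑ i, Real.exp ((a i + b i) / 2)) / (Real.sqrt A * Real.sqrt B)) := by
          rw [Finset.sum_sub_distrib, Finset.sum_add_distrib, ← Finset.mul_sum,
            ← Finset.sum_div]
      _ = 2 - 2 * (C / (Real.sqrt A * Real.sqrt B)) := by
          rw [hsumP, hsumQ, ← hC]; ring
  rw [hsum]
  have hgoal : (1 : ℝ) / 2 * (2 - 2 * (C / (Real.sqrt A * Real.sqrt B)))
      = 1 - C / (Real.sqrt A * Real.sqrt B) := by ring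
  rw [hgoal]
  have hsABpos : 0 < Real.sqrt A * Real.sqrt B :=
    mul_pos (Real.sqrt_pos.2 hApos) (Real.sqrt_pos.2 hBpos)
  by_cases hε1 : 1 ≤ ε
  · have : 0 ≤ C / (Real.sqrt A * Real.sqrt B) := by positivity
    nlinarith [sq_nonneg ε]
  push_neg at hε1
  -- key: A * B ≤ cosh ε * C ^ 2
  have hAB : A * B ≤ Real.cosh ε * C ^ 2 := by
    have hexp : A * B = ∑ i, ∑ j, Real.exp (a i + b j) := by
      rw [hA, hB, Finset.sum_mul_sum]
      simp [Real.exp_add]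
    have hC2 : C ^ 2 = ∑ i, ∑ j, Real.exp ((a i + b i) / 2 + (a j + b j) / 2) := by
      rw [hC, sq, Finset.sum_mul_sum]
      simp [Real.exp_add]
    have h2 : 2 * (A * B) ≤ 2 * (Real.cosh ε * C ^ 2) := by
      rw [hexp, hC2]
      have swap : ∑ i, ∑ j, Real.exp (a i + b j) = ∑ i, ∑ j, Real.exp (a j + b i) :=
        Finset.sum_comm
      calc 2 * ∑ i, ∑ j, Real.exp (a i + b j)
          = ∑ i, ∑ j, (Real.exp (a i + b j) + Real.exp (a j + b i)) := by
            rw [two_mul]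
            nth_rewrite 2 [swap]
            simp [Finset.sum_add_distrib]
        _ ≤ ∑ i, ∑ j, 2 * Real.cosh ε * Real.exp ((a i + b i) / 2 + (a j + b j) / 2) := by
            apply Finset.sum_le_sum
            intro i _
            apply Finset.sum_le_sum
            intro j _
            have key : ∀ s t : ℝ, |t| ≤ ε →
                Real.exp (s + t) + Real.exp (s + -t)
                  ≤ 2 * Real.cosh ε * Real.exp s := by
              intro s t htle
              rw [Real.exp_add, Real.exp_add, ← mul_add]
              have hct : Real.exp t + Real.exp (-t) = 2 * Real.cosh t := by
                rw [Real.cosh_eq]; ring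
              rw [hct]
              have hmono : Real.cosh t ≤ Real.cosh ε := by
                rw [Real.cosh_le_cosh, abs_of_nonneg hε]
                exact htle
              nlinarith [Real.exp_pos s]
            have h1 : a i + b j
                = ((a i + b i) / 2 + (a j + b j) / 2) + ((a i - b i) / 2 - (a j - b j) / 2) := by
              ring
            have h2 : a j + b i
                = ((a i + b i) / 2 + (a j + b j) / 2) + -((a i - b i) / 2 - (a j - b j) / 2) := by
              ring
            have htle : |(a i - b i) / 2 - (a j - b j) / 2| ≤ ε := by
              have ha1 := hab i
              have ha2 := hab j
              rw [abs_le] at *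
              constructor <;> [linarith [ha1.1, ha2.2]; linarith [ha1.2, ha2.1]]
            rw [h1, h2]
            exact key _ _ htle
        _ = 2 * (Real.cosh ε * ∑ i, ∑ j, Real.exp ((a i + b i) / 2 + (a j + b j) / 2)) := by
            simp only [← Finset.mul_sum]
            ring
    linarith
  -- cosh ε ≤ 1 / (1 - ε²) for ε < 1
  have hcosh : (1 - ε ^ 2) * Real.cosh ε ≤ 1 := by
    have h1 : ε + 1 ≤ Real.exp ε := Real.add_one_le_exp ε
    have h2 : -ε + 1 ≤ Real.exp (-ε) := Real.add_one_le_exp (-ε)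
    have h3 : Real.exp ε * Real.exp (-ε) = 1 := by
      rw [← Real.exp_add]; simp
    have hu : (1 - ε) * Real.exp ε ≤ 1 := by
      have := mul_le_mul_of_nonneg_left h2 (Real.exp_pos ε).le
      nlinarith
    have hv : (1 + ε) * Real.exp (-ε) ≤ 1 := by
      have := mul_le_mul_of_nonneg_left h1 (Real.exp_pos (-ε)).le
      nlinarith
    have hu' := mul_le_mul_of_nonneg_left hu (by linarith : (0:ℝ) ≤ 1 + ε)
    have hv' := mul_le_mul_of_nonneg_left hv (by linarith : (0:ℝ) ≤ 1 - ε)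
    rw [Real.cosh_eq]
    nlinarith [hu', hv']
  -- conclude: (1 - ε²) * √(A*B) ≤ C
  have hsAB : Real.sqrt A * Real.sqrt B = Real.sqrt (A * B) := by
    rw [Real.sqrt_mul hApos.le]
  have hkey : (1 - ε ^ 2) * Real.sqrt (A * B) ≤ C := by
    have h1ε : 0 ≤ 1 - ε ^ 2 := by nlinarith
    have hsq : ((1 - ε ^ 2) * Real.sqrt (A * B)) ^ 2 ≤ C ^ 2 := by
      rw [mul_pow, Real.sq_sqrt (by positivity : (0:ℝ) ≤ A * B)]
      have hch : 0 ≤ Real.cosh ε := (Real.cosh_pos ε).le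
      calc (1 - ε ^ 2) ^ 2 * (A * B) ≤ (1 - ε ^ 2) ^ 2 * (Real.cosh ε * C ^ 2) := by
            apply mul_le_mul_of_nonneg_left hAB (by positivity)
        _ ≤ C ^ 2 := by
            have e1 := mul_le_mul_of_nonneg_right hcosh (sq_nonneg C)
            have e2 := mul_le_mul_of_nonneg_left e1 h1ε
            have e3 := mul_le_mul_of_nonneg_right (by nlinarith : (1 - ε ^ 2) ≤ 1) (sq_nonneg C)
            nlinarith [e2, e3]
    exact le_of_pow_le_pow_left₀ (by norm_num : (2:ℕ) ≠ 0) hCpos.le hsq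
  rw [hsAB]
  have hC_div : 1 - ε ^ 2 ≤ C / Real.sqrt (A * B) := by
    rw [le_div_iff₀ (Real.sqrt_pos.2 (by positivity))]
    linarith [hkey]
  linarith
end

section
/- Let A, B ∈ ℝ^{n×d} and ε ≥ 0 satisfy max_{j∈[n]} ‖A_{j,*} − B_{j,*}‖₂ ≤ ε. Then for every x ∈ ℝ^d, the distributions P = Softmax_A(x) and Q = Softmax_B(x) satisfy H²(P, Q) ≤ ε²·‖x‖₂² and TV(P, Q) ≤ (ε·‖x‖₂)/2. -/
open Real Finset Matrix


lemma sqrt_exp' (x : ℝ) : Real.sqrt (Real.exp x) = Real.exp (x / 2) := by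
  rw [show Real.exp x = Real.exp (x/2) ^ 2 by rw [← Real.exp_nat_mul]; ring_nf]
  exact Real.sqrt_sq (Real.exp_pos _).le

lemma exp_le_quad {u : ℝ} (hu : |u| ≤ 1) : Real.exp u ≤ 1 + u + u ^ 2 := by
  have h := Real.exp_bound hu (n := 2) (by norm_num)
  have h2 : ∑ m ∈ Finset.range 2, u ^ m / m.factorial = 1 + u := by
    simp [Finset.sum_range_succ]
  rw [h2] at h
  have := (abs_sub_le_iff.1 h).1
  have hsq : |u| ^ 2 = u ^ 2 := sq_abs u
  norm_num [Nat.factorial] at this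
  nlinarith [sq_nonneg u]

lemma one_sub_exp_le (s : ℝ) : 1 - Real.exp s ≤ -s + s ^ 2 / 2 := by
  nlinarith [Real.add_one_le_exp s, sq_nonneg s]


lemma absdev_le {n : ℕ} (hn : 1 ≤ n) (p u : Fin n → ℝ) (c : ℝ)
    (hp : ∀ i, 0 ≤ p i) (hsum : ∑ i, p i = 1) (hu : ∀ i, |u i| ≤ c) :
    ∑ i, p i * |u i - ∑ j, p j * u j| ≤ c := by
  set m := ∑ j, p j * u j with hm
  have i0 : Fin n := ⟨0, hn⟩
  have hc : 0 ≤ c := (abs_nonneg _).trans (hu i0)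
  have hub : ∀ i, u i ≤ c := fun i => (le_abs_self _).trans (hu i)
  have hlb : ∀ i, -c ≤ u i := fun i => (neg_le_of_abs_le (hu i))
  have hmle : m ≤ c := by
    calc m ≤ ∑ j, p j * c := Finset.sum_le_sum fun j _ =>
        mul_le_mul_of_nonneg_left (hub j) (hp j)
    _ = c := by rw [← Finset.sum_mul, hsum, one_mul]
  have hmge : -c ≤ m := by
    calc (-c : ℝ) = ∑ j, p j * (-c) := by rw [← Finset.sum_mul, hsum, one_mul]
    _ ≤ m := Finset.sum_le_sum fun j _ => mul_le_mul_of_nonneg_left (hlb j) (hp j)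
  set T : Finset (Fin n) := Finset.univ.filter (fun i => m < u i) with hT
  set α := ∑ i ∈ T, p i with hα
  set A := ∑ i ∈ T, p i * (u i - m) with hA
  have htot : ∑ i, p i * (u i - m) = 0 := by
    simp only [mul_sub, Finset.sum_sub_distrib, ← hm, ← Finset.sum_mul, hsum]; ring
  have hsplit := Finset.sum_filter_add_sum_filter_not Finset.univ (fun i => m < u i)
      (fun i => p i * (u i - m))
  have hAc : ∑ i ∈ Finset.univ.filter (fun i => ¬ m < u i), p i * (m - u i) = A := by
    have : ∑ i ∈ Finset.univ.filter (fun i => ¬ m < u i), p i * (u i - m) = -A := by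
      rw [hA, hT]; linarith [hsplit.trans htot]
    calc ∑ i ∈ Finset.univ.filter (fun i => ¬ m < u i), p i * (m - u i)
        = -∑ i ∈ Finset.univ.filter (fun i => ¬ m < u i), p i * (u i - m) := by
          rw [← Finset.sum_neg_distrib]; exact Finset.sum_congr rfl fun i _ => by ring
    _ = A := by rw [this]; ring
  have habs : ∑ i, p i * |u i - m| = 2 * A := by
    rw [← Finset.sum_filter_add_sum_filter_not Finset.univ (fun i => m < u i)
      (fun i => p i * |u i - m|)]
    have h1 : ∑ i ∈ T, p i * |u i - m| = A := by
      refine Finset.sum_congr rfl fun i hi => ?_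
      rw [abs_of_pos (sub_pos.2 (Finset.mem_filter.1 hi).2)]
    have h2 : ∑ i ∈ Finset.univ.filter (fun i => ¬ m < u i), p i * |u i - m|
        = ∑ i ∈ Finset.univ.filter (fun i => ¬ m < u i), p i * (m - u i) := by
      refine Finset.sum_congr rfl fun i hi => ?_
      rw [abs_of_nonpos (sub_nonpos.2 (le_of_not_gt (Finset.mem_filter.1 hi).2)), neg_sub]
    rw [h1, h2, hAc]; ring
  have hαpos : 0 ≤ α := Finset.sum_nonneg fun i _ => hp i
  have hα1 : α ≤ 1 := by
    rw [← hsum]; exact Finset.sum_le_sum_of_subset_of_nonneg (Finset.subset_univ T)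
      (fun i _ _ => hp i)
  have hAnn : 0 ≤ A := Finset.sum_nonneg fun i hi =>
    mul_nonneg (hp i) (sub_nonneg.2 (le_of_lt (Finset.mem_filter.1 hi).2))
  have hA1 : A ≤ α * (c - m) := by
    rw [hα, Finset.sum_mul]
    exact Finset.sum_le_sum fun i _ => mul_le_mul_of_nonneg_left (by linarith [hub i]) (hp i)
  have hA2 : A ≤ (1 - α) * (c + m) := by
    have hcompl : ∑ i ∈ Finset.univ.filter (fun i => ¬ m < u i), p i = 1 - α := by
      have := Finset.sum_filter_add_sum_filter_not Finset.univ (fun i => m < u i) p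
      rw [hsum] at this; rw [hα, hT]; linarith
    rw [← hAc, ← hcompl, Finset.sum_mul]
    exact Finset.sum_le_sum fun i _ => mul_le_mul_of_nonneg_left (by linarith [hlb i]) (hp i)
  rw [habs]
  nlinarith [mul_le_mul_of_nonneg_left hA1 (by linarith : (0:ℝ) ≤ 1 - α),
    mul_le_mul_of_nonneg_left hA2 hαpos, sq_nonneg (2*α - 1), mul_nonneg hαpos hc]

lemma softmax_comb_diff_le {n : ℕ} (hn : 1 ≤ n) (a u s : Fin n → ℝ) (c : ℝ)
    (hs : ∀ i, |s i| ≤ 1) (hu : ∀ i, |u i| ≤ c) :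
    |(∑ i, s i * Real.exp (a i + u i)) / (∑ j, Real.exp (a j + u j))
      - (∑ i, s i * Real.exp (a i)) / (∑ j, Real.exp (a j))| ≤ c := by
  have hne : Nonempty (Fin n) := ⟨⟨0, hn⟩⟩
  set N : ℝ → ℝ := fun t => ∑ i, s i * Real.exp (a i + t * u i) with hNdef
  set D : ℝ → ℝ := fun t => ∑ j, Real.exp (a j + t * u j) with hDdef
  set N' : ℝ → ℝ := fun t => ∑ i, s i * (u i * Real.exp (a i + t * u i)) with hN'def
  set D' : ℝ → ℝ := fun t => ∑ j, u j * Real.exp (a j + t * u j) with hD'def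
  have hDpos : ∀ t, 0 < D t := fun t =>
    Finset.sum_pos (fun j _ => Real.exp_pos _) Finset.univ_nonempty
  have hlin : ∀ (i : Fin n) (t : ℝ), HasDerivAt (fun t => a i + t * u i) (u i) t := by
    intro i t
    simpa using (hasDerivAt_mul_const (u i)).const_add (a i)
  have hN : ∀ t, HasDerivAt N (N' t) t := by
    intro t
    apply HasDerivAt.fun_sum
    intro i _
    simpa [mul_comm, mul_assoc] using (((hlin i t).exp).const_mul (s i))
  have hD : ∀ t, HasDerivAt D (D' t) t := by
    intro t
    apply HasDerivAt.fun_sum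
    intro j _
    simpa [mul_comm] using ((hlin j t).exp)
  have hf : ∀ t, HasDerivAt (fun t => N t / D t)
      ((N' t * D t - N t * D' t) / D t ^ 2) t :=
    fun t => (hN t).div (hD t) (hDpos t).ne'
  have bound : ∀ t : ℝ, |(N' t * D t - N t * D' t) / D t ^ 2| ≤ c := by
    intro t
    have hD0 : D t ≠ 0 := (hDpos t).ne'
    set p : Fin n → ℝ := fun i => Real.exp (a i + t * u i) / D t with hpdef
    have hpnn : ∀ i, 0 ≤ p i := fun i => div_nonneg (Real.exp_pos _).le (hDpos t).le
    have hpsum : ∑ i, p i = 1 := by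
      rw [hpdef, ← Finset.sum_div, hDdef, div_self hD0]
    have hmean : ∑ j, p j * u j = D' t / D t := by
      simp only [hpdef, hD'def]
      rw [Finset.sum_div]
      exact Finset.sum_congr rfl fun j _ => by ring
    have key : (N' t * D t - N t * D' t) / D t ^ 2
        = ∑ i, s i * (p i * (u i - ∑ j, p j * u j)) := by
      rw [hmean]
      have : ∀ i : Fin n, s i * (p i * (u i - D' t / D t))
          = (s i * (u i * Real.exp (a i + t * u i)) * D t
              - s i * Real.exp (a i + t * u i) * D' t) / D t ^ 2 := by
        intro i; rw [hpdef]; field_simp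
      rw [Finset.sum_congr rfl fun i _ => this i, ← Finset.sum_div]
      congr 1
      rw [Finset.sum_sub_distrib, ← Finset.sum_mul, ← Finset.sum_mul]
    rw [key]
    calc |∑ i, s i * (p i * (u i - ∑ j, p j * u j))|
        ≤ ∑ i, |s i * (p i * (u i - ∑ j, p j * u j))| := Finset.abs_sum_le_sum_abs _ _
      _ ≤ ∑ i, p i * |u i - ∑ j, p j * u j| := by
          refine Finset.sum_le_sum fun i _ => ?_
          rw [abs_mul, abs_mul, abs_of_nonneg (hpnn i)]
          calc |s i| * (p i * |u i - ∑ j, p j * u j|)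
              ≤ 1 * (p i * |u i - ∑ j, p j * u j|) := by
                exact mul_le_mul_of_nonneg_right (hs i)
                  (mul_nonneg (hpnn i) (abs_nonneg _))
            _ = p i * |u i - ∑ j, p j * u j| := one_mul _
      _ ≤ c := absdev_le hn p u c hpnn hpsum hu
  have := norm_image_sub_le_of_norm_deriv_le_segment_01'
    (f := fun t => N t / D t) (f' := fun t => (N' t * D t - N t * D' t) / D t ^ 2)
    (fun t _ => (hf t).hasDerivWithinAt) (fun t _ => by rw [Real.norm_eq_abs]; exact bound t)
  rw [Real.norm_eq_abs] at this
  have h1 : N 1 / D 1 = (∑ i, s i * Real.exp (a i + u i)) / (∑ j, Real.exp (a j + u j)) := by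
    simp [hNdef, hDdef]
  have h0 : N 0 / D 0 = (∑ i, s i * Real.exp (a i)) / (∑ j, Real.exp (a j)) := by
    simp [hNdef, hDdef]
  change |N 1 / D 1 - N 0 / D 0| ≤ c at this
  rwa [h1, h0] at this

/-- Hellinger and TV bounds between `Softmax_A(x)` and `Softmax_B(x)` when the
rows of `A` and `B` are within `ε` in Euclidean norm. -/
theorem softmax_model_hellinger_tv_le_of_row_close
    (n d : ℕ) (hn : 1 ≤ n)
    (A B : Matrix (Fin n) (Fin d) ℝ) (ε : ℝ) (hε : 0 ≤ ε)
    (hrow : ∀ j : Fin n, Real.sqrt (∑ k, (A j k - B j k) ^ 2) ≤ ε)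
    (x : Fin d → ℝ)
    (P Q : Fin n → ℝ)
    (hP : ∀ i, P i = Real.exp (A.mulVec x i) / ∑ j, Real.exp (A.mulVec x j))
    (hQ : ∀ i, Q i = Real.exp (B.mulVec x i) / ∑ j, Real.exp (B.mulVec x j)) :
    (1 / 2) * ∑ i, (Real.sqrt (P i) - Real.sqrt (Q i)) ^ 2
        ≤ ε ^ 2 * (Real.sqrt (∑ k, (x k) ^ 2)) ^ 2 ∧
    (1 / 2) * ∑ i, |P i - Q i| ≤ ε * Real.sqrt (∑ k, (x k) ^ 2) / 2 := by
  have hne : Nonempty (Fin n) := ⟨⟨0, hn⟩⟩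
  set a : Fin n → ℝ := A.mulVec x with ha
  set b : Fin n → ℝ := B.mulVec x with hb
  set c : ℝ := ε * Real.sqrt (∑ k, x k ^ 2) with hcdef
  have hc0 : 0 ≤ c := mul_nonneg hε (Real.sqrt_nonneg _)
  -- logit closeness
  have hu : ∀ i, |b i - a i| ≤ c := by
    intro i
    have hdiff : b i - a i = ∑ k, (B i k - A i k) * x k := by
      simp [ha, hb, Matrix.mulVec, dotProduct, ← Finset.sum_sub_distrib, sub_mul]
    have hsq : Real.sqrt (∑ k, (B i k - A i k) ^ 2) ≤ ε := by
      have : (∑ k, (B i k - A i k) ^ 2) = ∑ k, (A i k - B i k) ^ 2 :=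
        Finset.sum_congr rfl fun k _ => by ring
      rw [this]; exact hrow i
    have h1 := Real.sum_mul_le_sqrt_mul_sqrt Finset.univ (fun k => B i k - A i k) x
    have h2 := Real.sum_mul_le_sqrt_mul_sqrt Finset.univ (fun k => -(B i k - A i k)) x
    simp only [neg_mul, Finset.sum_neg_distrib, neg_sq] at h2
    have hmul : Real.sqrt (∑ k, (B i k - A i k) ^ 2) * Real.sqrt (∑ k, x k ^ 2)
        ≤ ε * Real.sqrt (∑ k, x k ^ 2) :=
      mul_le_mul_of_nonneg_right hsq (Real.sqrt_nonneg _)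
    rw [hdiff, hcdef]
    rw [abs_le]
    constructor <;> nlinarith [h1, h2, hmul]
  set SA : ℝ := ∑ j, Real.exp (a j) with hSAdef
  set SB : ℝ := ∑ j, Real.exp (b j) with hSBdef
  have hSA : 0 < SA := Finset.sum_pos (fun j _ => Real.exp_pos _) Finset.univ_nonempty
  have hSB : 0 < SB := Finset.sum_pos (fun j _ => Real.exp_pos _) Finset.univ_nonempty
  have hPnn : ∀ i, 0 ≤ P i := fun i => by rw [hP i]; positivity
  have hQnn : ∀ i, 0 ≤ Q i := fun i => by rw [hQ i]; positivity
  have hPsum : ∑ i, P i = 1 := by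
    rw [Finset.sum_congr rfl fun i _ => hP i, ← Finset.sum_div, div_self hSA.ne']
  have hQsum : ∑ i, Q i = 1 := by
    rw [Finset.sum_congr rfl fun i _ => hQ i, ← Finset.sum_div, div_self hSB.ne']
  constructor
  · -- Hellinger bound
    by_cases hc1 : c ≤ 1
    · -- small c case
      set w : ℝ := Real.log (SB / SA) with hwdef
      have hratio : SB / SA = ∑ i, P i * Real.exp (b i - a i) := by
        rw [hSBdef, Finset.sum_div]
        refine Finset.sum_congr rfl fun i _ => ?_
        rw [hP i, Real.exp_sub]
        field_simp
      have hPu2 : ∑ i, P i * (b i - a i) ^ 2 ≤ c ^ 2 := by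
        calc ∑ i, P i * (b i - a i) ^ 2 ≤ ∑ i, P i * c ^ 2 := by
              refine Finset.sum_le_sum fun i _ => mul_le_mul_of_nonneg_left ?_ (hPnn i)
              rw [← sq_abs]
              exact pow_le_pow_left₀ (abs_nonneg _) (hu i) 2
          _ = c ^ 2 := by rw [← Finset.sum_mul, hPsum, one_mul]
      have hwle : w ≤ ∑ i, P i * (b i - a i) + c ^ 2 := by
        have hY : SB / SA ≤ 1 + ∑ i, P i * (b i - a i) + ∑ i, P i * (b i - a i) ^ 2 := by
          rw [hratio]
          calc ∑ i, P i * Real.exp (b i - a i)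
              ≤ ∑ i, P i * (1 + (b i - a i) + (b i - a i) ^ 2) := by
                refine Finset.sum_le_sum fun i _ => mul_le_mul_of_nonneg_left ?_ (hPnn i)
                exact exp_le_quad ((hu i).trans hc1)
            _ = 1 + ∑ i, P i * (b i - a i) + ∑ i, P i * (b i - a i) ^ 2 := by
                simp only [mul_add, Finset.sum_add_distrib, mul_one, hPsum]
        have hYpos : (0:ℝ) < 1 + ∑ i, P i * (b i - a i) + ∑ i, P i * (b i - a i) ^ 2 :=
          lt_of_lt_of_le (div_pos hSB hSA) hY
        have := Real.log_le_sub_one_of_pos hYpos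
        have hlog : w ≤ Real.log (1 + ∑ i, P i * (b i - a i) + ∑ i, P i * (b i - a i) ^ 2) := by
          rw [hwdef]
          exact Real.log_le_log (div_pos hSB hSA) hY
        linarith
      have hwabs : |w| ≤ c := by
        have hup : SB / SA ≤ Real.exp c := by
          rw [hratio]
          calc ∑ i, P i * Real.exp (b i - a i) ≤ ∑ i, P i * Real.exp c := by
                refine Finset.sum_le_sum fun i _ => mul_le_mul_of_nonneg_left ?_ (hPnn i)
                exact Real.exp_le_exp.2 ((le_abs_self _).trans (hu i))
            _ = Real.exp c := by rw [← Finset.sum_mul, hPsum, one_mul]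
        have hdn : Real.exp (-c) ≤ SB / SA := by
          rw [hratio]
          calc Real.exp (-c) = ∑ i, P i * Real.exp (-c) := by
                rw [← Finset.sum_mul, hPsum, one_mul]
            _ ≤ ∑ i, P i * Real.exp (b i - a i) := by
                refine Finset.sum_le_sum fun i _ => mul_le_mul_of_nonneg_left ?_ (hPnn i)
                exact Real.exp_le_exp.2 (neg_le_of_abs_le (hu i))
        rw [abs_le, hwdef]
        constructor
        · calc -c = Real.log (Real.exp (-c)) := (Real.log_exp _).symm
            _ ≤ Real.log (SB / SA) := Real.log_le_log (Real.exp_pos _) hdn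
        · calc Real.log (SB / SA) ≤ Real.log (Real.exp c) :=
              Real.log_le_log (div_pos hSB hSA) hup
            _ = c := Real.log_exp _
      -- key pointwise identity
      have hexpw : Real.exp w = SB / SA := Real.exp_log (div_pos hSB hSA)
      have hPQ : ∀ i, Real.sqrt (P i) * Real.sqrt (Q i)
          = P i * Real.exp ((b i - a i - w) / 2) := by
        intro i
        have hsq : P i * Q i = (P i * Real.exp ((b i - a i - w) / 2)) ^ 2 := by
          have he2 : (Real.exp ((b i - a i - w) / 2)) ^ 2
              = Real.exp (b i - a i) / Real.exp w := by
            rw [sq, ← Real.exp_add, ← Real.exp_sub]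
            congr 1
            ring
          rw [mul_pow, he2, hexpw, hP i, hQ i, Real.exp_sub]
          field_simp
        rw [← Real.sqrt_mul (hPnn i), hsq,
          Real.sqrt_sq (mul_nonneg (hPnn i) (Real.exp_pos _).le)]
      set s : Fin n → ℝ := fun i => (b i - a i - w) / 2 with hsdef
      have hs2 : ∀ i, (s i) ^ 2 ≤ c ^ 2 := by
        intro i
        have h1 := abs_le.1 (hu i)
        have h2 := abs_le.1 hwabs
        have habs : |s i| ≤ c := by
          rw [hsdef]
          dsimp only
          rw [abs_le]
          constructor <;> linarith [h1.1, h1.2, h2.1, h2.2]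
        calc (s i) ^ 2 = |s i| ^ 2 := (sq_abs _).symm
          _ ≤ c ^ 2 := pow_le_pow_left₀ (abs_nonneg _) habs 2
      have hhalf : (1/2) * ∑ i, (Real.sqrt (P i) - Real.sqrt (Q i)) ^ 2
          = ∑ i, P i * (1 - Real.exp (s i)) := by
        have expand : ∀ i, (Real.sqrt (P i) - Real.sqrt (Q i)) ^ 2
            = P i + Q i - 2 * (P i * Real.exp (s i)) := by
          intro i
          rw [hsdef, ← hPQ i, sub_sq, Real.sq_sqrt (hPnn i), Real.sq_sqrt (hQnn i)]
          ring
        rw [Finset.sum_congr rfl fun i _ => expand i]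
        simp only [Finset.sum_sub_distrib, Finset.sum_add_distrib, hPsum, hQsum, mul_sub,
          mul_one, ← Finset.mul_sum]
        ring
      have hfinal : ∑ i, P i * (1 - Real.exp (s i)) ≤ c ^ 2 := by
        have step : ∑ i, P i * (1 - Real.exp (s i))
            ≤ ∑ i, (P i * (-(s i)) + P i * (c ^ 2 / 2)) := by
          refine Finset.sum_le_sum fun i _ => ?_
          have h1 := one_sub_exp_le (s i)
          have h2 := hs2 i
          nlinarith [mul_le_mul_of_nonneg_left h1 (hPnn i),
            mul_le_mul_of_nonneg_left h2 (hPnn i), hPnn i]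
        have hsum1 : ∑ i, (P i * (-(s i)) + P i * (c ^ 2 / 2))
            = (w - ∑ i, P i * (b i - a i)) / 2 + c ^ 2 / 2 := by
          rw [Finset.sum_add_distrib, ← Finset.sum_mul, hPsum, one_mul]
          congr 1
          have : ∀ i, P i * (-(s i)) = (P i * w - P i * (b i - a i)) / 2 := by
            intro i; rw [hsdef]; ring
          rw [Finset.sum_congr rfl fun i _ => this i, ← Finset.sum_div,
            Finset.sum_sub_distrib, ← Finset.sum_mul, hPsum, one_mul]
        rw [hsum1] at step
        linarith
      calc (1/2) * ∑ i, (Real.sqrt (P i) - Real.sqrt (Q i)) ^ 2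
          = ∑ i, P i * (1 - Real.exp (s i)) := hhalf
        _ ≤ c ^ 2 := hfinal
        _ = ε ^ 2 * Real.sqrt (∑ k, x k ^ 2) ^ 2 := by rw [hcdef, mul_pow]
    · -- large c case
      push_neg at hc1
      have hterm : ∀ i, (Real.sqrt (P i) - Real.sqrt (Q i)) ^ 2 ≤ P i + Q i := by
        intro i
        nlinarith [Real.sq_sqrt (hPnn i), Real.sq_sqrt (hQnn i),
          mul_nonneg (Real.sqrt_nonneg (P i)) (Real.sqrt_nonneg (Q i))]
      calc (1/2) * ∑ i, (Real.sqrt (P i) - Real.sqrt (Q i)) ^ 2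
          ≤ (1/2) * ∑ i, (P i + Q i) := by
            refine mul_le_mul_of_nonneg_left (Finset.sum_le_sum fun i _ => hterm i) (by norm_num)
        _ = 1 := by rw [Finset.sum_add_distrib, hPsum, hQsum]; norm_num
        _ ≤ c ^ 2 := by nlinarith
        _ = ε ^ 2 * Real.sqrt (∑ k, x k ^ 2) ^ 2 := by rw [hcdef, mul_pow]
  · -- TV bound
    set s : Fin n → ℝ := fun i => if Q i ≤ P i then 1 else -1 with hsdef
    have hs : ∀ i, |s i| ≤ 1 := by
      intro i; rw [hsdef]; dsimp only; split <;> simp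
    have key := softmax_comb_diff_le hn a (fun i => b i - a i) s c hs hu
    simp only [show ∀ i : Fin n, a i + (b i - a i) = b i from fun i => by ring] at key
    have e1 : (∑ i, s i * Real.exp (b i)) / (∑ j, Real.exp (b j)) = ∑ i, s i * Q i := by
      rw [Finset.sum_div]
      exact Finset.sum_congr rfl fun i _ => by rw [hQ i, hSBdef]; ring
    have e0 : (∑ i, s i * Real.exp (a i)) / (∑ j, Real.exp (a j)) = ∑ i, s i * P i := by
      rw [Finset.sum_div]
      exact Finset.sum_congr rfl fun i _ => by rw [hP i, hSAdef]; ring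
    rw [e1, e0] at key
    have habs : ∑ i, |P i - Q i| = ∑ i, s i * P i - ∑ i, s i * Q i := by
      rw [← Finset.sum_sub_distrib]
      refine Finset.sum_congr rfl fun i _ => ?_
      rw [hsdef]; dsimp only
      split
      · rename_i h
        rw [abs_of_nonneg (by linarith)]; ring
      · rename_i h
        push_neg at h
        rw [abs_of_neg (by linarith)]; ring
    have hkey2 : ∑ i, s i * P i - ∑ i, s i * Q i ≤ c := by
      have := neg_le_abs (∑ i, s i * Q i - ∑ i, s i * P i)
      linarith [key, abs_le.1 key]
    rw [habs]
    rw [hcdef] at hkey2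
    linarith
end

section
/- Let A, B ∈ ℝ^{n×d} differ in exactly one row i ∈ [n] (i.e., A_{j,*} = B_{j,*} for all j ≠ i). Let δ > 0, 0 < c ≤ C, and ε ≥ 0. Suppose AᵀA ⪰ δ·I_d, suppose ‖B_{i,*}ᵀB_{i,*} − A_{i,*}ᵀA_{i,*}‖_op ≤ ε, and let s ∈ ℝⁿ satisfy c ≤ s_j² ≤ C for all j ∈ [n]. Let A_s = S^{−1}A and B_s = S^{−1}B where S = Diag(s). Then (1 − εC/(cδ))·A_sᵀA_s ⪯ B_sᵀB_s ⪯ (1 + εC/(cδ))·A_sᵀA_s. -/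
open Matrix
open scoped RealInnerProductSpace

/-- If `A` and `B` differ in exactly one row `i`, `AᵀA ⪰ δ·I`, the outer
products of the differing rows are `ε`-close in operator norm, and
`c ≤ sⱼ² ≤ C`, then `(1 − εC/(cδ))·A_sᵀA_s ⪯ B_sᵀB_s ⪯ (1 + εC/(cδ))·A_sᵀA_s`. -/
theorem rescaled_gram_loewner_close_of_one_row_change
    (n d : ℕ)
    (A B : Matrix (Fin n) (Fin d) ℝ) (i : Fin n)
    (hrow : ∀ j : Fin n, j ≠ i → A j = B j)
    (δ c C ε : ℝ) (hδ : 0 < δ) (hc : 0 < c) (hcC : c ≤ C) (hε : 0 ≤ ε)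
    (hA : (Aᵀ * A - δ • (1 : Matrix (Fin d) (Fin d) ℝ)).PosSemidef)
    (hop : ‖Matrix.toEuclideanCLM (𝕜 := ℝ)
        (Matrix.vecMulVec (B i) (B i) - Matrix.vecMulVec (A i) (A i))‖ ≤ ε)
    (s : Fin n → ℝ) (hs : ∀ j, c ≤ s j ^ 2 ∧ s j ^ 2 ≤ C)
    (As Bs : Matrix (Fin n) (Fin d) ℝ)
    (hAs : As = (Matrix.diagonal s)⁻¹ * A)
    (hBs : Bs = (Matrix.diagonal s)⁻¹ * B) :
    (Bsᵀ * Bs - (1 - ε * C / (c * δ)) • (Asᵀ * As)).PosSemidef ∧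
    ((1 + ε * C / (c * δ)) • (Asᵀ * As) - Bsᵀ * Bs).PosSemidef := by
  have hC : (0:ℝ) < C := lt_of_lt_of_le hc hcC
  set k := ε * C / (c * δ) with hk
  have hk0 : 0 ≤ k := by positivity
  have hsne : ∀ j, s j ≠ 0 := by
    intro j h
    have := (hs j).1
    rw [h] at this
    simp at this
    linarith
  have hDinv : (Matrix.diagonal s)⁻¹ = Matrix.diagonal (fun j => (s j)⁻¹) := by
    apply Matrix.inv_eq_left_inv
    rw [Matrix.diagonal_mul_diagonal]
    have h1 : (fun j => (s j)⁻¹ * s j) = fun _ => (1:ℝ) :=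
      funext fun j => inv_mul_cancel₀ (hsne j)
    rw [h1, Matrix.diagonal_one]
  -- quadratic form of Gram matrices
  have quad : ∀ (M : Matrix (Fin n) (Fin d) ℝ) (x : Fin d → ℝ),
      x ⬝ᵥ ((Mᵀ * M) *ᵥ x) = ∑ j, ((M *ᵥ x) j) ^ 2 := by
    intro M x
    rw [← Matrix.mulVec_mulVec, Matrix.dotProduct_mulVec, Matrix.vecMul_transpose]
    simp [dotProduct, sq]
  have hAsMul : ∀ x : Fin d → ℝ, ∀ j, (As *ᵥ x) j = (s j)⁻¹ * ((A *ᵥ x) j) := by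
    intro x j
    rw [hAs, hDinv, ← Matrix.mulVec_mulVec, Matrix.mulVec_diagonal]
  have hBsMul : ∀ x : Fin d → ℝ, ∀ j, (Bs *ᵥ x) j = (s j)⁻¹ * ((B *ᵥ x) j) := by
    intro x j
    rw [hBs, hDinv, ← Matrix.mulVec_mulVec, Matrix.mulVec_diagonal]
  -- quadratic form of rank-one matrices
  have rank1 : ∀ (w x : Fin d → ℝ),
      x ⬝ᵥ ((Matrix.vecMulVec w w) *ᵥ x) = (w ⬝ᵥ x) ^ 2 := by
    intro w x
    simp only [dotProduct, Matrix.mulVec, Matrix.vecMulVec_apply, sq,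
      Finset.mul_sum, Finset.sum_mul]
    rw [Finset.sum_comm]
    refine Finset.sum_congr rfl fun j _ => Finset.sum_congr rfl fun l _ => by ring
  -- operator norm bound on the quadratic form of M₀
  set M₀ : Matrix (Fin d) (Fin d) ℝ :=
    Matrix.vecMulVec (B i) (B i) - Matrix.vecMulVec (A i) (A i) with hM₀
  have hopq : ∀ x : Fin d → ℝ, |x ⬝ᵥ (M₀ *ᵥ x)| ≤ ε * (x ⬝ᵥ x) := by
    intro x
    set y : EuclideanSpace ℝ (Fin d) := (WithLp.equiv 2 _).symm x with hy
    have h1 : (inner ℝ y (Matrix.toEuclideanCLM (𝕜 := ℝ) M₀ y) : ℝ) = x ⬝ᵥ (M₀ *ᵥ x) := by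
      rw [hy, WithLp.equiv_symm_apply, Matrix.toEuclideanCLM_toLp]
      simp [PiLp.inner_apply, dotProduct, Matrix.toLin'_apply, mul_comm]
    have h2 : (inner ℝ y y : ℝ) = x ⬝ᵥ x := by
      rw [hy, WithLp.equiv_symm_apply, PiLp.inner_apply]
      simp [dotProduct, sq]
    calc |x ⬝ᵥ (M₀ *ᵥ x)| = |(inner ℝ y (Matrix.toEuclideanCLM (𝕜 := ℝ) M₀ y) : ℝ)| := by rw [h1]
      _ ≤ ‖y‖ * ‖Matrix.toEuclideanCLM (𝕜 := ℝ) M₀ y‖ := abs_real_inner_le_norm _ _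
      _ ≤ ‖y‖ * (‖Matrix.toEuclideanCLM (𝕜 := ℝ) M₀‖ * ‖y‖) := by
          gcongr; exact ContinuousLinearMap.le_opNorm _ _
      _ ≤ ‖y‖ * (ε * ‖y‖) := by gcongr
      _ = ε * (x ⬝ᵥ x) := by rw [← h2, real_inner_self_eq_norm_mul_norm]; ring
  -- Hermitian facts
  have hermA : (Asᵀ * As).IsHermitian := by
    simpa using Matrix.isHermitian_conjTranspose_mul_self As
  have hermB : (Bsᵀ * Bs).IsHermitian := by
    simpa using Matrix.isHermitian_conjTranspose_mul_self Bs
  -- nonzero s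
  have hs2 : ∀ j, (0:ℝ) < s j ^ 2 := fun j => lt_of_lt_of_le hc (hs j).1
  -- main per-vector estimate
  have main : ∀ x : Fin d → ℝ,
      |x ⬝ᵥ ((Bsᵀ * Bs) *ᵥ x) - x ⬝ᵥ ((Asᵀ * As) *ᵥ x)| ≤ k * (x ⬝ᵥ ((Asᵀ * As) *ᵥ x)) := by
    intro x
    set u : Fin n → ℝ := A *ᵥ x with hu
    set v : Fin n → ℝ := B *ᵥ x with hv
    have hN0 : (0:ℝ) ≤ x ⬝ᵥ x := Finset.sum_nonneg fun j _ => mul_self_nonneg _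
    -- diff formula
    have hdiff : x ⬝ᵥ ((Bsᵀ * Bs) *ᵥ x) - x ⬝ᵥ ((Asᵀ * As) *ᵥ x)
        = ((s i) ^ 2)⁻¹ * (x ⬝ᵥ (M₀ *ᵥ x)) := by
      rw [quad, quad]
      rw [← Finset.sum_sub_distrib]
      have hterm : ∀ j : Fin n, ((Bs *ᵥ x) j) ^ 2 - ((As *ᵥ x) j) ^ 2
          = if j = i then ((s i) ^ 2)⁻¹ * ((v i) ^ 2 - (u i) ^ 2) else 0 := by
        intro j
        rw [hAsMul, hBsMul]
        by_cases hj : j = i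
        · subst hj; simp [mul_pow, inv_pow]; ring
        · have huv : (A *ᵥ x) j = (B *ᵥ x) j := by
            simp [Matrix.mulVec, hrow j hj]
          rw [← hu, ← hv] at huv ⊢
          simp [hj, huv]
      rw [Finset.sum_congr rfl fun j _ => hterm j]
      rw [Finset.sum_ite_eq' Finset.univ i _]
      simp only [Finset.mem_univ, if_true]
      have hMq : x ⬝ᵥ (M₀ *ᵥ x) = (v i) ^ 2 - (u i) ^ 2 := by
        rw [hM₀, Matrix.sub_mulVec, dotProduct_sub, rank1, rank1]
        rfl
      rw [hMq]
    -- lower bound on Q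
    have hq : δ * (x ⬝ᵥ x) ≤ ∑ j, (u j) ^ 2 := by
      have := hA.dotProduct_mulVec_nonneg x
      rw [star_trivial] at this
      rw [Matrix.sub_mulVec, dotProduct_sub, quad] at this
      have h1 : x ⬝ᵥ ((δ • (1 : Matrix (Fin d) (Fin d) ℝ)) *ᵥ x) = δ * (x ⬝ᵥ x) := by
        simp [Matrix.smul_mulVec, dotProduct_smul, smul_eq_mul]
      rw [h1] at this
      linarith
    have hQ : δ * (x ⬝ᵥ x) / C ≤ x ⬝ᵥ ((Asᵀ * As) *ᵥ x) := by
      rw [quad]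
      have h1 : ∀ j, (1/C) * (u j) ^ 2 ≤ ((As *ᵥ x) j) ^ 2 := by
        intro j
        rw [hAsMul, mul_pow, inv_pow, ← hu]
        have h2 : (1:ℝ)/C ≤ ((s j) ^ 2)⁻¹ := by
          rw [one_div]
          exact inv_anti₀ (hs2 j) (hs j).2
        have := sq_nonneg (u j)
        nlinarith
      calc δ * (x ⬝ᵥ x) / C = (1/C) * (δ * (x ⬝ᵥ x)) := by ring
        _ ≤ (1/C) * ∑ j, (u j) ^ 2 := by
            exact mul_le_mul_of_nonneg_left hq (div_nonneg zero_le_one hC.le)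
        _ = ∑ j, (1/C) * (u j) ^ 2 := Finset.mul_sum _ _ _
        _ ≤ ∑ j, ((As *ᵥ x) j) ^ 2 := Finset.sum_le_sum fun j _ => h1 j
    -- bound the difference
    have habs : |x ⬝ᵥ ((Bsᵀ * Bs) *ᵥ x) - x ⬝ᵥ ((Asᵀ * As) *ᵥ x)| ≤ ε * (x ⬝ᵥ x) / c := by
      rw [hdiff, abs_mul]
      have h1 : |((s i) ^ 2)⁻¹| = ((s i) ^ 2)⁻¹ := abs_of_pos (inv_pos.mpr (hs2 i))
      rw [h1]
      have h2 : ((s i) ^ 2)⁻¹ ≤ c⁻¹ := inv_anti₀ hc (hs i).1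
      calc ((s i) ^ 2)⁻¹ * |x ⬝ᵥ (M₀ *ᵥ x)| ≤ c⁻¹ * (ε * (x ⬝ᵥ x)) := by
            exact mul_le_mul h2 (hopq x) (abs_nonneg _) (inv_nonneg.mpr hc.le)
        _ = ε * (x ⬝ᵥ x) / c := by ring
    have heq : k * (δ * (x ⬝ᵥ x) / C) = ε * (x ⬝ᵥ x) / c := by
      rw [hk]; field_simp
    have hkQ : k * (δ * (x ⬝ᵥ x) / C) ≤ k * (x ⬝ᵥ ((Asᵀ * As) *ᵥ x)) :=
      mul_le_mul_of_nonneg_left hQ hk0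
    calc |x ⬝ᵥ ((Bsᵀ * Bs) *ᵥ x) - x ⬝ᵥ ((Asᵀ * As) *ᵥ x)| ≤ ε * (x ⬝ᵥ x) / c := habs
      _ = k * (δ * (x ⬝ᵥ x) / C) := heq.symm
      _ ≤ k * (x ⬝ᵥ ((Asᵀ * As) *ᵥ x)) := hkQ
  have hermSmul : ∀ (r : ℝ) (M : Matrix (Fin d) (Fin d) ℝ), M.IsHermitian →
      (r • M).IsHermitian := by
    intro r M h
    unfold Matrix.IsHermitian at h ⊢
    rw [Matrix.conjTranspose_smul, star_trivial, h]
  constructor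
  · refine .of_dotProduct_mulVec_nonneg (hermB.sub (hermSmul _ _ hermA)) fun x => ?_
    rw [star_trivial, Matrix.sub_mulVec, dotProduct_sub,
      Matrix.smul_mulVec, dotProduct_smul, smul_eq_mul]
    have h := abs_le.mp (main x)
    nlinarith [h.1, h.2]
  · refine .of_dotProduct_mulVec_nonneg ((hermSmul _ _ hermA).sub hermB) fun x => ?_
    rw [star_trivial, Matrix.sub_mulVec, dotProduct_sub,
      Matrix.smul_mulVec, dotProduct_smul, smul_eq_mul]
    have h := abs_le.mp (main x)
    nlinarith [h.1, h.2]
end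

section
/- Let X, Y ∈ ℝ^{n×d} each have linearly independent columns, let t ∈ [0,1), and suppose (1 − t)·XᵀX ⪯ YᵀY ⪯ (1 + t)·XᵀX. Let j ∈ [n] be such that X_{j,*} = Y_{j,*}. Then the leverage scores ℓ_j(X) = (X(XᵀX)^{−1}Xᵀ)_{jj} and ℓ_j(Y) = (Y(YᵀY)^{−1}Yᵀ)_{jj} satisfy ℓ_j(X)/(1 + t) ≤ ℓ_j(Y) ≤ ℓ_j(X)/(1 − t). -/
open Matrix

lemma quad_inv_bound {d : ℕ} {A : Matrix (Fin d) (Fin d) ℝ} (hA : A.PosDef)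
    (x v : Fin d → ℝ) :
    2 * (x ⬝ᵥ v) - v ⬝ᵥ (A *ᵥ v) ≤ x ⬝ᵥ (A⁻¹ *ᵥ x) := by
  have hdet : IsUnit A.det := hA.isUnit.map detMonoidHom
  have hAinv : A * A⁻¹ = 1 := Matrix.mul_nonsing_inv A hdet
  set u := A⁻¹ *ᵥ x with hu
  have hAu : A *ᵥ u = x := by
    rw [hu, Matrix.mulVec_mulVec, hAinv, Matrix.one_mulVec]
  have hpsd := hA.posSemidef.dotProduct_mulVec_nonneg (v - u)
  have hsym : Aᵀ = A := hA.isHermitian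
  have expand : (v - u) ⬝ᵥ (A *ᵥ (v - u)) =
      v ⬝ᵥ (A *ᵥ v) - 2 * (x ⬝ᵥ v) + x ⬝ᵥ u := by
    have h1 : u ⬝ᵥ (A *ᵥ v) = x ⬝ᵥ v := by
      rw [Matrix.dotProduct_mulVec, ← Matrix.mulVec_transpose, hsym, hAu]
    have h2 : v ⬝ᵥ (A *ᵥ u) = x ⬝ᵥ v := by
      rw [hAu, dotProduct_comm]
    have h3 : u ⬝ᵥ (A *ᵥ u) = x ⬝ᵥ u := by rw [hAu, dotProduct_comm]
    rw [Matrix.mulVec_sub, sub_dotProduct, dotProduct_sub,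
      dotProduct_sub, h1, h2, h3]
    ring
  simp only [star_trivial] at hpsd
  rw [expand] at hpsd
  linarith

lemma inv_quad_mono {d : ℕ} {A B : Matrix (Fin d) (Fin d) ℝ}
    (hA : A.PosDef) (hB : B.PosDef) (hAB : (B - A).PosSemidef) (x : Fin d → ℝ) :
    x ⬝ᵥ (B⁻¹ *ᵥ x) ≤ x ⬝ᵥ (A⁻¹ *ᵥ x) := by
  have hdet : IsUnit B.det := hB.isUnit.map detMonoidHom
  have hBinv : B * B⁻¹ = 1 := Matrix.mul_nonsing_inv B hdet
  set v := B⁻¹ *ᵥ x with hv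
  have hBv : B *ᵥ v = x := by
    rw [hv, Matrix.mulVec_mulVec, hBinv, Matrix.one_mulVec]
  have hvBv : v ⬝ᵥ (B *ᵥ v) = x ⬝ᵥ v := by rw [hBv, dotProduct_comm]
  have hle : v ⬝ᵥ (A *ᵥ v) ≤ v ⬝ᵥ (B *ᵥ v) := by
    have := hAB.dotProduct_mulVec_nonneg v
    simp only [star_trivial, Matrix.sub_mulVec, dotProduct_sub] at this
    linarith
  have hq := quad_inv_bound hA x v
  have : x ⬝ᵥ v = 2 * (x ⬝ᵥ v) - v ⬝ᵥ (B *ᵥ v) := by rw [hvBv]; ring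
  calc x ⬝ᵥ (B⁻¹ *ᵥ x) = 2 * (x ⬝ᵥ v) - v ⬝ᵥ (B *ᵥ v) := this
    _ ≤ 2 * (x ⬝ᵥ v) - v ⬝ᵥ (A *ᵥ v) := by linarith
    _ ≤ x ⬝ᵥ (A⁻¹ *ᵥ x) := hq

lemma posDef_smul' {d : ℕ} {A : Matrix (Fin d) (Fin d) ℝ} (hA : A.PosDef)
    {c : ℝ} (hc : 0 < c) : (c • A).PosDef := by
  refine posDef_iff_dotProduct_mulVec.mpr ⟨?_, fun v hv => ?_⟩
  · show (c • A)ᴴ = c • A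
    rw [Matrix.conjTranspose_smul, star_trivial, hA.1.eq]
  · have := hA.dotProduct_mulVec_pos hv
    rw [Matrix.smul_mulVec, dotProduct_smul, smul_eq_mul]
    exact mul_pos hc this

lemma gram_posDef {n d : ℕ} (X : Matrix (Fin n) (Fin d) ℝ)
    (hX : LinearIndependent ℝ (fun k : Fin d => fun i : Fin n => X i k)) :
    (Xᵀ * X).PosDef := by
  refine posDef_iff_dotProduct_mulVec.mpr ⟨Matrix.isHermitian_conjTranspose_mul_self X, fun v hv => ?_⟩
  have hker : X *ᵥ v ≠ 0 := by
    intro h0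
    apply hv
    have := Fintype.linearIndependent_iff.mp hX v ?_
    · funext k; exact this k
    · funext i
      have := congrFun h0 i
      simpa [Matrix.mulVec, dotProduct, Finset.sum_apply, mul_comm] using this
  have : star v ⬝ᵥ ((Xᵀ * X) *ᵥ v) = (X *ᵥ v) ⬝ᵥ (X *ᵥ v) := by
    simp only [star_trivial, ← Matrix.mulVec_mulVec, Matrix.dotProduct_mulVec,
      ← Matrix.mulVec_transpose]
    rfl
  rw [this]
  have hnn : 0 ≤ (X *ᵥ v) ⬝ᵥ (X *ᵥ v) :=
    Finset.sum_nonneg fun i _ => mul_self_nonneg _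
  rcases lt_or_eq_of_le hnn with h | h
  · exact h
  · exact absurd (dotProduct_self_eq_zero.mp h.symm) hker

lemma entry_eq_quad {n d : ℕ} (X : Matrix (Fin n) (Fin d) ℝ)
    (M : Matrix (Fin d) (Fin d) ℝ) (j : Fin n) :
    (X * M * Xᵀ) j j = (X j) ⬝ᵥ (M *ᵥ (X j)) := by
  simp only [Matrix.mul_apply, Matrix.mulVec, dotProduct, Matrix.transpose_apply,
    Finset.sum_mul, Finset.mul_sum]
  rw [Finset.sum_comm]
  congr 1; ext k; congr 1; ext l; ring

/-- Leverage score stability: if `(1−t)·XᵀX ⪯ YᵀY ⪯ (1+t)·XᵀX` and the `j`-th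
rows of `X` and `Y` coincide, then `ℓ_j(X)/(1+t) ≤ ℓ_j(Y) ≤ ℓ_j(X)/(1−t)`. -/
theorem leverage_score_stability
    (n d : ℕ)
    (X Y : Matrix (Fin n) (Fin d) ℝ)
    (hX : LinearIndependent ℝ (fun k : Fin d => fun i : Fin n => X i k))
    (hY : LinearIndependent ℝ (fun k : Fin d => fun i : Fin n => Y i k))
    (t : ℝ) (ht0 : 0 ≤ t) (ht1 : t < 1)
    (hlow : (Yᵀ * Y - (1 - t) • (Xᵀ * X)).PosSemidef)
    (hhigh : ((1 + t) • (Xᵀ * X) - Yᵀ * Y).PosSemidef)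
    (j : Fin n) (hrow : X j = Y j) :
    (X * (Xᵀ * X)⁻¹ * Xᵀ) j j / (1 + t) ≤ (Y * (Yᵀ * Y)⁻¹ * Yᵀ) j j ∧
    (Y * (Yᵀ * Y)⁻¹ * Yᵀ) j j ≤ (X * (Xᵀ * X)⁻¹ * Xᵀ) j j / (1 - t) := by
  have hAX : (Xᵀ * X).PosDef := gram_posDef X hX
  have hAY : (Yᵀ * Y).PosDef := gram_posDef Y hY
  have h1t : (0:ℝ) < 1 - t := by linarith
  have h1t' : (0:ℝ) < 1 + t := by linarith
  have hdetX : IsUnit (Xᵀ * X).det := hAX.isUnit.map detMonoidHom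
  -- scaled matrices posdef
  have hlo : ((1 - t) • (Xᵀ * X)).PosDef := posDef_smul' hAX h1t
  have hhi : ((1 + t) • (Xᵀ * X)).PosDef := posDef_smul' hAX h1t'
  -- inverses of scaled matrices
  have hinvlo : ((1 - t) • (Xᵀ * X))⁻¹ = (1 - t)⁻¹ • (Xᵀ * X)⁻¹ := by
    have : Invertible (1 - t) := invertibleOfNonzero h1t.ne'
    rw [Matrix.inv_smul _ _ hdetX, invOf_eq_inv]
  have hinvhi : ((1 + t) • (Xᵀ * X))⁻¹ = (1 + t)⁻¹ • (Xᵀ * X)⁻¹ := by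
    have : Invertible (1 + t) := invertibleOfNonzero h1t'.ne'
    rw [Matrix.inv_smul _ _ hdetX, invOf_eq_inv]
  set x := X j with hx
  have hEX : (X * (Xᵀ * X)⁻¹ * Xᵀ) j j = x ⬝ᵥ ((Xᵀ * X)⁻¹ *ᵥ x) := entry_eq_quad X _ j
  have hEY : (Y * (Yᵀ * Y)⁻¹ * Yᵀ) j j = x ⬝ᵥ ((Yᵀ * Y)⁻¹ *ᵥ x) := by
    rw [entry_eq_quad Y _ j, ← hrow]
  constructor
  · -- lower bound: ℓX/(1+t) ≤ ℓY, from YᵀY ≤ (1+t)XᵀX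
    have := inv_quad_mono hAY hhi hhigh x
    rw [hinvhi, Matrix.smul_mulVec, dotProduct_smul] at this
    rw [hEX, hEY, div_le_iff₀ h1t']
    rw [smul_eq_mul] at this
    calc x ⬝ᵥ ((Xᵀ * X)⁻¹ *ᵥ x) = (1 + t) * ((1 + t)⁻¹ * (x ⬝ᵥ ((Xᵀ * X)⁻¹ *ᵥ x))) := by
          field_simp
      _ ≤ (1 + t) * (x ⬝ᵥ ((Yᵀ * Y)⁻¹ *ᵥ x)) := by
          exact mul_le_mul_of_nonneg_left this h1t'.le
      _ = x ⬝ᵥ ((Yᵀ * Y)⁻¹ *ᵥ x) * (1 + t) := by ring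
  · -- upper bound: ℓY ≤ ℓX/(1−t), from (1−t)XᵀX ≤ YᵀY
    have := inv_quad_mono hlo hAY hlow x
    rw [hinvlo, Matrix.smul_mulVec, dotProduct_smul, smul_eq_mul] at this
    rw [hEX, hEY, le_div_iff₀ h1t]
    calc x ⬝ᵥ ((Yᵀ * Y)⁻¹ *ᵥ x) * (1 - t)
        ≤ (1 - t)⁻¹ * (x ⬝ᵥ ((Xᵀ * X)⁻¹ *ᵥ x)) * (1 - t) := by
          exact mul_le_mul_of_nonneg_right this h1t.le
      _ = x ⬝ᵥ ((Xᵀ * X)⁻¹ *ᵥ x) := by field_simp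
end

section
/- There exists an absolute constant K > 0 with the following property. Let A, B ∈ ℝ^{n×d}, δ > 0, and 0 < c ≤ C. Suppose AᵀA ⪰ δ·I_d, suppose BᵀB is positive definite, and let s ∈ ℝⁿ satisfy c ≤ s_i² ≤ C for all i ∈ [n]. Let ε = Σ_{i∈[n]} ‖B_{i,*}ᵀB_{i,*} − A_{i,*}ᵀA_{i,*}‖_op. Then TV(Leverage_A(s), Leverage_B(s)) ≤ K·ε·C/(c·δ), and consequently H²(Leverage_A(s), Leverage_B(s)) ≤ K·ε·C/(c·δ). -/
open Matrix Finset

namespace LevScoreAux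

noncomputable def nrm {d : ℕ} (x : Fin d → ℝ) : ℝ := ‖(WithLp.equiv 2 (Fin d → ℝ)).symm x‖

variable {n d : ℕ}

lemma nrm_nonneg (x : Fin d → ℝ) : 0 ≤ nrm x := norm_nonneg _

lemma nrm_sq (x : Fin d → ℝ) : nrm x ^ 2 = x ⬝ᵥ x := by
  rw [nrm, ← real_inner_self_eq_norm_sq]
  rw [real_inner_self_eq_norm_sq, EuclideanSpace.norm_sq_eq, dotProduct]
  refine Finset.sum_congr rfl fun i _ => ?_
  rw [Real.norm_eq_abs, sq_abs, sq]
  rfl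

lemma dot_self_nonneg (x : Fin d → ℝ) : 0 ≤ x ⬝ᵥ x := by rw [← nrm_sq]; positivity

lemma abs_dot_le (x y : Fin d → ℝ) : |x ⬝ᵥ y| ≤ nrm x * nrm y := by
  have h : x ⬝ᵥ y = (inner ℝ ((WithLp.equiv 2 (Fin d → ℝ)).symm x)
      ((WithLp.equiv 2 (Fin d → ℝ)).symm y) : ℝ) := by
    simp [PiLp.inner_apply, dotProduct, RCLike.inner_apply, mul_comm]
  rw [h, nrm, nrm]
  exact abs_real_inner_le_norm _ _

lemma abs_dot_mulVec_le (F : Matrix (Fin d) (Fin d) ℝ) (x y : Fin d → ℝ) :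
    |x ⬝ᵥ (F *ᵥ y)| ≤ ‖Matrix.toEuclideanCLM (𝕜 := ℝ) F‖ * (nrm x * nrm y) := by
  have h1 : |x ⬝ᵥ (F *ᵥ y)| ≤ nrm x * nrm (F *ᵥ y) := abs_dot_le _ _
  have h2 : nrm (F *ᵥ y) ≤ ‖Matrix.toEuclideanCLM (𝕜 := ℝ) F‖ * nrm y := by
    rw [nrm, nrm]
    exact ContinuousLinearMap.le_opNorm (Matrix.toEuclideanCLM (𝕜 := ℝ) F) ((WithLp.equiv 2 (Fin d → ℝ)).symm y)
  calc |x ⬝ᵥ (F *ᵥ y)| ≤ nrm x * nrm (F *ᵥ y) := h1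
    _ ≤ nrm x * (‖Matrix.toEuclideanCLM (𝕜 := ℝ) F‖ * nrm y) :=
        mul_le_mul_of_nonneg_left h2 (nrm_nonneg x)
    _ = ‖Matrix.toEuclideanCLM (𝕜 := ℝ) F‖ * (nrm x * nrm y) := by ring

section Inv
variable {G : Matrix (Fin d) (Fin d) ℝ} {α : ℝ}
  (hsym : Gᵀ = G) (hα : 0 < α) (hlb : ∀ x, α * (x ⬝ᵥ x) ≤ x ⬝ᵥ (G *ᵥ x))

include hsym hα hlb

lemma lb_posDef : G.PosDef := by
  rw [Matrix.posDef_iff_dotProduct_mulVec]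
  constructor
  · ext i j
    simp only [conjTranspose_apply, star_trivial]
    exact congrFun (congrFun hsym i) j
  · intro x hx
    simp only [star_trivial]
    have h1 : 0 < x ⬝ᵥ x := by
      rcases lt_or_eq_of_le (dot_self_nonneg x) with h | h
      · exact h
      · exact absurd (dotProduct_self_eq_zero.mp h.symm) hx
    exact lt_of_lt_of_le (by positivity) (hlb x)

lemma lb_isUnit_det : IsUnit G.det :=
  (Matrix.isUnit_iff_isUnit_det G).mp (lb_posDef hsym hα hlb).isUnit

lemma lb_mul_inv : G * G⁻¹ = 1 := Matrix.mul_nonsing_inv G (lb_isUnit_det hsym hα hlb)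
lemma lb_inv_mul : G⁻¹ * G = 1 := Matrix.nonsing_inv_mul G (lb_isUnit_det hsym hα hlb)

omit hα hlb in
lemma lb_inv_symm : (G⁻¹)ᵀ = G⁻¹ := by rw [Matrix.transpose_nonsing_inv, hsym]

lemma lb_mulVec_inv (x : Fin d → ℝ) : G *ᵥ (G⁻¹ *ᵥ x) = x := by
  rw [Matrix.mulVec_mulVec, lb_mul_inv hsym hα hlb, Matrix.one_mulVec]

lemma lb_inv_quad_eq (x : Fin d → ℝ) :
    x ⬝ᵥ (G⁻¹ *ᵥ x) = (G⁻¹ *ᵥ x) ⬝ᵥ (G *ᵥ (G⁻¹ *ᵥ x)) := by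
  rw [lb_mulVec_inv hsym hα hlb, dotProduct_comm]

lemma lb_inv_quad_nonneg (x : Fin d → ℝ) : 0 ≤ x ⬝ᵥ (G⁻¹ *ᵥ x) := by
  rw [lb_inv_quad_eq hsym hα hlb]
  refine le_trans ?_ (hlb _)
  have := dot_self_nonneg (G⁻¹ *ᵥ x)
  positivity

lemma lb_inv_sqnorm_le (x : Fin d → ℝ) :
    (G⁻¹ *ᵥ x) ⬝ᵥ (G⁻¹ *ᵥ x) ≤ (x ⬝ᵥ (G⁻¹ *ᵥ x)) / α := by
  rw [le_div_iff₀ hα, mul_comm]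
  rw [lb_inv_quad_eq hsym hα hlb]
  exact hlb _

lemma lb_inv_quad_le (x : Fin d → ℝ) : x ⬝ᵥ (G⁻¹ *ᵥ x) ≤ (x ⬝ᵥ x) / α := by
  set t := x ⬝ᵥ (G⁻¹ *ᵥ x) with ht
  have htnn : 0 ≤ t := lb_inv_quad_nonneg hsym hα hlb x
  rcases eq_or_lt_of_le htnn with h | h
  · rw [← h]; exact div_nonneg (dot_self_nonneg x) hα.le
  · have h1 : t ≤ nrm x * nrm (G⁻¹ *ᵥ x) := (le_abs_self _).trans (abs_dot_le _ _)
    have h2 : nrm (G⁻¹ *ᵥ x) ^ 2 ≤ t / α := by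
      rw [nrm_sq]; exact lb_inv_sqnorm_le hsym hα hlb x
    have h3 : t ^ 2 ≤ (nrm x)^2 * (t / α) := by
      calc t ^ 2 ≤ (nrm x * nrm (G⁻¹ *ᵥ x))^2 := by
            apply sq_le_sq' _ h1
            nlinarith [mul_nonneg (nrm_nonneg x) (nrm_nonneg (G⁻¹ *ᵥ x))]
        _ = (nrm x)^2 * (nrm (G⁻¹ *ᵥ x))^2 := by ring
        _ ≤ (nrm x)^2 * (t / α) := by
            apply mul_le_mul_of_nonneg_left h2 (by positivity)
    have hx2 : (nrm x)^2 = x ⬝ᵥ x := nrm_sq x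
    have h4 : t * t ≤ ((x ⬝ᵥ x) * α⁻¹) * t := by
      rw [div_eq_mul_inv, hx2] at h3; nlinarith
    have h5 := le_of_mul_le_mul_right h4 h
    rw [div_eq_mul_inv]; exact h5

lemma lb_inv_nrm_le (x : Fin d → ℝ) : nrm (G⁻¹ *ᵥ x) ≤ nrm x / α := by
  have h1 : nrm (G⁻¹ *ᵥ x) ^ 2 ≤ (nrm x / α) ^ 2 := by
    rw [nrm_sq, div_pow, nrm_sq]
    calc (G⁻¹ *ᵥ x) ⬝ᵥ (G⁻¹ *ᵥ x) ≤ (x ⬝ᵥ (G⁻¹ *ᵥ x)) / α :=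
          lb_inv_sqnorm_le hsym hα hlb x
      _ ≤ ((x ⬝ᵥ x) / α) / α :=
          (div_le_div_iff_of_pos_right hα).mpr (lb_inv_quad_le hsym hα hlb x)
      _ = (x ⬝ᵥ x) / α ^ 2 := by ring
  have h2 : 0 ≤ nrm x / α := div_nonneg (nrm_nonneg x) hα.le
  nlinarith [nrm_nonneg (G⁻¹ *ᵥ x)]

end Inv

lemma proj_diag (W : Matrix (Fin n) (Fin d) ℝ) (X : Matrix (Fin d) (Fin d) ℝ) (i : Fin n) :
    (W * X * Wᵀ) i i = W i ⬝ᵥ (X *ᵥ W i) := by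
  simp only [Matrix.mul_apply, Matrix.transpose_apply, dotProduct, Matrix.mulVec,
    Finset.sum_mul, Finset.mul_sum]
  rw [Finset.sum_comm]
  exact Finset.sum_congr rfl fun j _ => Finset.sum_congr rfl fun k _ => by ring

lemma sum_rows_quad (W : Matrix (Fin n) (Fin d) ℝ) (X : Matrix (Fin d) (Fin d) ℝ) :
    ∑ i, W i ⬝ᵥ (X *ᵥ W i) = Matrix.trace (X * (Wᵀ * W)) := by
  simp only [Matrix.trace, Matrix.diag_apply, Matrix.mul_apply, Matrix.transpose_apply,
    dotProduct, Matrix.mulVec, Finset.mul_sum, Finset.sum_mul]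
  rw [Finset.sum_comm]
  refine Finset.sum_congr rfl fun j _ => ?_
  rw [Finset.sum_comm]
  refine Finset.sum_congr rfl fun k _ => ?_
  exact Finset.sum_congr rfl fun i _ => by ring

lemma dot_gram (W : Matrix (Fin n) (Fin d) ℝ) (u v : Fin d → ℝ) :
    u ⬝ᵥ ((Wᵀ * W) *ᵥ v) = ∑ i, (W i ⬝ᵥ u) * (W i ⬝ᵥ v) := by
  have h : u ⬝ᵥ ((Wᵀ * W) *ᵥ v) = (W *ᵥ u) ⬝ᵥ (W *ᵥ v) := by
    rw [← Matrix.mulVec_mulVec, Matrix.dotProduct_mulVec, Matrix.vecMul_transpose]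
  rw [h]
  simp [dotProduct, Matrix.mulVec]

lemma dot_vecMulVec (v x y : Fin d → ℝ) :
    x ⬝ᵥ ((Matrix.vecMulVec v v) *ᵥ y) = (v ⬝ᵥ x) * (v ⬝ᵥ y) := by
  simp only [Matrix.vecMulVec, Matrix.mulVec, dotProduct, Matrix.of_apply,
    Finset.mul_sum, Finset.sum_mul]
  rw [Finset.sum_comm]
  refine Finset.sum_congr rfl fun i _ => ?_
  exact Finset.sum_congr rfl fun j _ => by ring

lemma dot_symm_move {G : Matrix (Fin d) (Fin d) ℝ} (hs : Gᵀ = G) (x y : Fin d → ℝ) :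
    x ⬝ᵥ (G *ᵥ y) = (G *ᵥ x) ⬝ᵥ y := by
  rw [Matrix.dotProduct_mulVec]
  nth_rewrite 1 [← hs]
  rw [Matrix.vecMul_transpose]

lemma dot_symm_swap {G : Matrix (Fin d) (Fin d) ℝ} (hs : Gᵀ = G) (x y : Fin d → ℝ) :
    x ⬝ᵥ (G *ᵥ y) = y ⬝ᵥ (G *ᵥ x) := by
  rw [dot_symm_move hs, dotProduct_comm]

lemma polarization {G : Matrix (Fin d) (Fin d) ℝ} (hs : Gᵀ = G) (a b : Fin d → ℝ) :
    (b + a) ⬝ᵥ (G *ᵥ (b - a)) = b ⬝ᵥ (G *ᵥ b) - a ⬝ᵥ (G *ᵥ a) := by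
  rw [Matrix.mulVec_sub, add_dotProduct, dotProduct_sub, dotProduct_sub,
    dot_symm_swap hs a b]
  ring

lemma nrm_mul_nrm_le_two_opnorm (a b : Fin d → ℝ)
    {e : ℝ} (he0 : 0 ≤ e)
    (habs : ∀ x y : Fin d → ℝ, |x ⬝ᵥ ((Matrix.vecMulVec b b - Matrix.vecMulVec a a) *ᵥ y)|
      ≤ e * (nrm x * nrm y)) :
    nrm (b + a) * nrm (b - a) ≤ 2 * e := by
  set u := b + a
  set v := b - a
  have hkey : u ⬝ᵥ ((Matrix.vecMulVec b b - Matrix.vecMulVec a a) *ᵥ v)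
      = (b ⬝ᵥ u) * (b ⬝ᵥ v) - (a ⬝ᵥ u) * (a ⬝ᵥ v) := by
    rw [Matrix.sub_mulVec, dotProduct_sub, dot_vecMulVec, dot_vecMulVec]
  have hlow : (u ⬝ᵥ u) * (v ⬝ᵥ v) / 2
      ≤ (b ⬝ᵥ u) * (b ⬝ᵥ v) - (a ⬝ᵥ u) * (a ⬝ᵥ v) := by
    have h1 : b ⬝ᵥ u = b ⬝ᵥ b + a ⬝ᵥ b := by
      simp [u, dotProduct_add, dotProduct_comm]
    have h2 : b ⬝ᵥ v = b ⬝ᵥ b - a ⬝ᵥ b := by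
      simp [v, dotProduct_sub, dotProduct_comm]
    have h3 : a ⬝ᵥ u = a ⬝ᵥ b + a ⬝ᵥ a := by
      simp [u, dotProduct_add, dotProduct_comm, add_comm]
    have h4 : a ⬝ᵥ v = a ⬝ᵥ b - a ⬝ᵥ a := by
      simp [v, dotProduct_sub, dotProduct_comm]
    have h5 : u ⬝ᵥ u = b ⬝ᵥ b + a ⬝ᵥ a + 2 * (a ⬝ᵥ b) := by
      simp [u, dotProduct_add, add_dotProduct, dotProduct_comm]; ring
    have h6 : v ⬝ᵥ v = b ⬝ᵥ b + a ⬝ᵥ a - 2 * (a ⬝ᵥ b) := by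
      simp [v, dotProduct_sub, sub_dotProduct, dotProduct_comm]; ring
    rw [h1, h2, h3, h4, h5, h6]
    nlinarith [sq_nonneg (b ⬝ᵥ b - a ⬝ᵥ a)]
  have hup := habs u v
  have ht : 0 ≤ nrm u * nrm v := mul_nonneg (nrm_nonneg u) (nrm_nonneg v)
  have hsq : (nrm u * nrm v) ^ 2 = (u ⬝ᵥ u) * (v ⬝ᵥ v) := by
    rw [mul_pow, nrm_sq, nrm_sq]
  rcases eq_or_lt_of_le ht with h | h
  · rw [← h]; linarith
  · have : (nrm u * nrm v) ^ 2 / 2 ≤ e * (nrm u * nrm v) := by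
      rw [hsq]
      calc (u ⬝ᵥ u) * (v ⬝ᵥ v) / 2 ≤ (b ⬝ᵥ u) * (b ⬝ᵥ v) - (a ⬝ᵥ u) * (a ⬝ᵥ v) := hlow
        _ = u ⬝ᵥ ((Matrix.vecMulVec b b - Matrix.vecMulVec a a) *ᵥ v) := hkey.symm
        _ ≤ |u ⬝ᵥ ((Matrix.vecMulVec b b - Matrix.vecMulVec a a) *ᵥ v)| := le_abs_self _
        _ ≤ e * (nrm u * nrm v) := hup
    nlinarith

lemma sqrt_sub_sq_le_abs {p q : ℝ} (hp : 0 ≤ p) (hq : 0 ≤ q) :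
    (Real.sqrt p - Real.sqrt q) ^ 2 ≤ |p - q| := by
  rcases le_total p q with h | h
  · rw [abs_of_nonpos (by linarith)]
    have hab : Real.sqrt p ≤ Real.sqrt q := Real.sqrt_le_sqrt h
    nlinarith [Real.sq_sqrt hp, Real.sq_sqrt hq, Real.sqrt_nonneg p,
      mul_nonneg (Real.sqrt_nonneg p) (sub_nonneg.2 hab)]
  · rw [abs_of_nonneg (by linarith)]
    have hab : Real.sqrt q ≤ Real.sqrt p := Real.sqrt_le_sqrt h
    nlinarith [Real.sq_sqrt hp, Real.sq_sqrt hq, Real.sqrt_nonneg q,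
      mul_nonneg (Real.sqrt_nonneg q) (sub_nonneg.2 hab)]

lemma diag_inv_mul_row {s : Fin n → ℝ} (hs : ∀ i, s i ≠ 0)
    (A : Matrix (Fin n) (Fin d) ℝ) (i : Fin n) :
    ((Matrix.diagonal s)⁻¹ * A) i = (s i)⁻¹ • A i := by
  have hinv : (Matrix.diagonal s)⁻¹ = Matrix.diagonal (fun i => (s i)⁻¹) := by
    apply Matrix.inv_eq_right_inv
    rw [Matrix.diagonal_mul_diagonal]
    have : (fun i => s i * (s i)⁻¹) = fun _ => (1 : ℝ) := by
      funext i; exact mul_inv_cancel₀ (hs i)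
    rw [this, Matrix.diagonal_one]
  funext j
  rw [hinv, Matrix.diagonal_mul]
  simp

end LevScoreAux

open LevScoreAux

set_option maxHeartbeats 3000000 in
/-- There is an absolute constant `K > 0` such that the TV and squared Hellinger
distances between the leverage score distributions of `A` and `B` are bounded
by `K·ε·C/(c·δ)`, where `ε` is the sum of operator-norm differences of the
outer products of corresponding rows. -/
theorem leverage_score_model_tv_hellinger_bound :
    ∃ K : ℝ, 0 < K ∧
      ∀ (n d : ℕ) (A B : Matrix (Fin n) (Fin d) ℝ) (δ c C : ℝ),
        0 < δ → 0 < c → c ≤ C →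
        (Aᵀ * A - δ • (1 : Matrix (Fin d) (Fin d) ℝ)).PosSemidef →
        (Bᵀ * B).PosDef →
        ∀ s : Fin n → ℝ, (∀ i, c ≤ s i ^ 2 ∧ s i ^ 2 ≤ C) →
        ∀ ε : ℝ,
          ε = ∑ i : Fin n, ‖Matrix.toEuclideanCLM (𝕜 := ℝ)
              (Matrix.vecMulVec (B i) (B i) - Matrix.vecMulVec (A i) (A i))‖ →
        ∀ As Bs : Matrix (Fin n) (Fin d) ℝ,
          As = (Matrix.diagonal s)⁻¹ * A →
          Bs = (Matrix.diagonal s)⁻¹ * B →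
        ∀ P Q : Fin n → ℝ,
          (∀ i, P i = (As * (Asᵀ * As)⁻¹ * Asᵀ) i i / d) →
          (∀ i, Q i = (Bs * (Bsᵀ * Bs)⁻¹ * Bsᵀ) i i / d) →
          (1 / 2) * ∑ i, |P i - Q i| ≤ K * ε * C / (c * δ) ∧
          (1 / 2) * ∑ i, (Real.sqrt (P i) - Real.sqrt (Q i)) ^ 2
            ≤ K * ε * C / (c * δ) := by
  refine ⟨4, by norm_num, ?_⟩
  intro n d A B δ c C hδ hc hcC hA hB s hs ε hε As Bs hAs hBs P Q hP hQ
  have hC : 0 < C := lt_of_lt_of_le hc hcC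
  -- the operator norms of the row-wise differences
  set e : Fin n → ℝ := fun i => ‖Matrix.toEuclideanCLM (𝕜 := ℝ)
      (Matrix.vecMulVec (B i) (B i) - Matrix.vecMulVec (A i) (A i))‖ with hedef
  have he0 : ∀ i, 0 ≤ e i := fun i => norm_nonneg _
  have hε' : ε = ∑ i, e i := hε
  have hε0 : 0 ≤ ε := hε' ▸ Finset.sum_nonneg fun i _ => he0 i
  have hRHS0 : 0 ≤ 4 * ε * C / (c * δ) :=
    div_nonneg (mul_nonneg (mul_nonneg (by norm_num) hε0) hC.le)
      (mul_nonneg hc.le hδ.le)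
  -- degenerate case `d = 0`
  rcases Nat.eq_zero_or_pos d with hd0 | hdpos
  · subst hd0
    have hP0 : ∀ i, P i = 0 := fun i => by rw [hP i]; simp
    have hQ0 : ∀ i, Q i = 0 := fun i => by rw [hQ i]; simp
    constructor
    · simp only [hP0, hQ0]
      simpa using hRHS0
    · simp only [hP0, hQ0]
      simpa using hRHS0
  have hd1 : (1 : ℝ) ≤ (d : ℝ) := by exact_mod_cast hdpos
  have hdR : (0 : ℝ) < (d : ℝ) := by positivity
  -- basic facts about s
  have hsq : ∀ i, 0 < s i ^ 2 := fun i => lt_of_lt_of_le hc (hs i).1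
  have hsne : ∀ i, s i ≠ 0 := by
    intro i h
    have := hsq i
    rw [h] at this
    simp at this
  -- rows of the scaled matrices
  have hAsrow : ∀ i, As i = (s i)⁻¹ • A i := fun i => by
    rw [hAs]; exact diag_inv_mul_row hsne A i
  have hBsrow : ∀ i, Bs i = (s i)⁻¹ • B i := fun i => by
    rw [hBs]; exact diag_inv_mul_row hsne B i
  -- the operator-norm bilinear bound
  have habsF : ∀ (i : Fin n) (x y : Fin d → ℝ),
      |x ⬝ᵥ ((Matrix.vecMulVec (B i) (B i) - Matrix.vecMulVec (A i) (A i)) *ᵥ y)|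
        ≤ e i * (nrm x * nrm y) := fun i x y => abs_dot_mulVec_le _ x y
  -- formulas for P and Q
  have hPf : ∀ i, P i = (As i ⬝ᵥ ((Asᵀ * As)⁻¹ *ᵥ As i)) / d := fun i => by
    rw [hP i, proj_diag]
  have hQf : ∀ i, Q i = (Bs i ⬝ᵥ ((Bsᵀ * Bs)⁻¹ *ᵥ Bs i)) / d := fun i => by
    rw [hQ i, proj_diag]
  set M := Asᵀ * As with hMdef
  set N := Bsᵀ * Bs with hNdef
  have hMsym : Mᵀ = M := by
    rw [hMdef, Matrix.transpose_mul, Matrix.transpose_transpose]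
  have hNsym : Nᵀ = N := by
    rw [hNdef, Matrix.transpose_mul, Matrix.transpose_transpose]
  -- lower bound for the quadratic form of A
  have hAq : ∀ x : Fin d → ℝ, δ * (x ⬝ᵥ x) ≤ ∑ i, (A i ⬝ᵥ x) * (A i ⬝ᵥ x) := by
    intro x
    have h := hA.dotProduct_mulVec_nonneg x
    simp only [star_trivial] at h
    rw [Matrix.sub_mulVec, dotProduct_sub, Matrix.smul_mulVec, Matrix.one_mulVec,
      dotProduct_smul, smul_eq_mul, dot_gram] at h
    linarith
  -- quadratic form identities
  have hMq : ∀ x : Fin d → ℝ, x ⬝ᵥ (M *ᵥ x) = ∑ i, (s i ^ 2)⁻¹ * ((A i ⬝ᵥ x) * (A i ⬝ᵥ x)) := by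
    intro x
    rw [hMdef, dot_gram]
    refine Finset.sum_congr rfl fun i _ => ?_
    rw [hAsrow i, smul_dotProduct, smul_eq_mul, sq, mul_inv]
    ring
  have hNq : ∀ x : Fin d → ℝ, x ⬝ᵥ (N *ᵥ x) = ∑ i, (s i ^ 2)⁻¹ * ((B i ⬝ᵥ x) * (B i ⬝ᵥ x)) := by
    intro x
    rw [hNdef, dot_gram]
    refine Finset.sum_congr rfl fun i _ => ?_
    rw [hBsrow i, smul_dotProduct, smul_eq_mul, sq, mul_inv]
    ring
  have hCinv_le : ∀ i, C⁻¹ ≤ (s i ^ 2)⁻¹ := fun i =>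
    inv_anti₀ (hsq i) (hs i).2
  have hcinv_ge : ∀ i, (s i ^ 2)⁻¹ ≤ c⁻¹ := fun i =>
    inv_anti₀ hc (hs i).1
  -- M ⪰ (δ/C) I
  have hMlb : ∀ x : Fin d → ℝ, (δ / C) * (x ⬝ᵥ x) ≤ x ⬝ᵥ (M *ᵥ x) := by
    intro x
    rw [hMq x]
    calc (δ / C) * (x ⬝ᵥ x) = C⁻¹ * (δ * (x ⬝ᵥ x)) := by ring
      _ ≤ C⁻¹ * ∑ i, (A i ⬝ᵥ x) * (A i ⬝ᵥ x) :=
          mul_le_mul_of_nonneg_left (hAq x) (by positivity)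
      _ = ∑ i, C⁻¹ * ((A i ⬝ᵥ x) * (A i ⬝ᵥ x)) := Finset.mul_sum _ _ _
      _ ≤ ∑ i, (s i ^ 2)⁻¹ * ((A i ⬝ᵥ x) * (A i ⬝ᵥ x)) := by
          refine Finset.sum_le_sum fun i _ => ?_
          exact mul_le_mul_of_nonneg_right (hCinv_le i) (mul_self_nonneg _)
  have hα : (0:ℝ) < δ / C := by positivity
  -- bilinear difference bound
  have hgramdiff : ∀ u v : Fin d → ℝ,
      u ⬝ᵥ (N *ᵥ v) - u ⬝ᵥ (M *ᵥ v)
        = ∑ i, (s i ^ 2)⁻¹ *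
            (u ⬝ᵥ ((Matrix.vecMulVec (B i) (B i) - Matrix.vecMulVec (A i) (A i)) *ᵥ v)) := by
    intro u v
    rw [hMdef, hNdef, dot_gram, dot_gram, ← Finset.sum_sub_distrib]
    refine Finset.sum_congr rfl fun i _ => ?_
    rw [Matrix.sub_mulVec, dotProduct_sub, dot_vecMulVec, dot_vecMulVec,
      hAsrow i, hBsrow i, smul_dotProduct, smul_dotProduct, smul_dotProduct,
      smul_dotProduct, smul_eq_mul, smul_eq_mul, smul_eq_mul, smul_eq_mul, sq, mul_inv]
    rw [dotProduct_comm (B i) u, dotProduct_comm (B i) v,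
      dotProduct_comm (A i) u, dotProduct_comm (A i) v]
    ring
  have habsgram : ∀ u v : Fin d → ℝ,
      |u ⬝ᵥ (N *ᵥ v) - u ⬝ᵥ (M *ᵥ v)| ≤ (ε / c) * (nrm u * nrm v) := by
    intro u v
    rw [hgramdiff u v]
    calc |∑ i, (s i ^ 2)⁻¹ *
          (u ⬝ᵥ ((Matrix.vecMulVec (B i) (B i) - Matrix.vecMulVec (A i) (A i)) *ᵥ v))|
        ≤ ∑ i, |(s i ^ 2)⁻¹ *
          (u ⬝ᵥ ((Matrix.vecMulVec (B i) (B i) - Matrix.vecMulVec (A i) (A i)) *ᵥ v))| :=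
          Finset.abs_sum_le_sum_abs _ _
      _ ≤ ∑ i, c⁻¹ * (e i * (nrm u * nrm v)) := by
          refine Finset.sum_le_sum fun i _ => ?_
          rw [abs_mul, abs_of_nonneg (by positivity : (0:ℝ) ≤ (s i ^ 2)⁻¹)]
          exact mul_le_mul (hcinv_ge i) (habsF i u v) (abs_nonneg _) (by positivity)
      _ = (ε / c) * (nrm u * nrm v) := by
          rw [← Finset.mul_sum, ← Finset.sum_mul, ← hε']
          ring
  -- positive definiteness of M and N, inverses
  have hMpd : M.PosDef := lb_posDef hMsym hα hMlb
  have hMim : M⁻¹ * M = 1 := lb_inv_mul hMsym hα hMlb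
  have hMisym : (M⁻¹)ᵀ = M⁻¹ := lb_inv_symm hMsym
  have hMinnn : ∀ x, 0 ≤ x ⬝ᵥ (M⁻¹ *ᵥ x) := lb_inv_quad_nonneg hMsym hα hMlb
  have hBq : ∀ x : Fin d → ℝ, x ⬝ᵥ ((Bᵀ * B) *ᵥ x) = ∑ i, (B i ⬝ᵥ x) * (B i ⬝ᵥ x) :=
    fun x => dot_gram B x x
  have hNpd : N.PosDef := by
    rw [Matrix.posDef_iff_dotProduct_mulVec]
    constructor
    · ext i j
      simp only [conjTranspose_apply, star_trivial]
      exact congrFun (congrFun hNsym i) j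
    · intro x hx
      simp only [star_trivial]
      have h1 := hB.dotProduct_mulVec_pos hx
      simp only [star_trivial] at h1
      have h2 : C⁻¹ * (x ⬝ᵥ ((Bᵀ * B) *ᵥ x)) ≤ x ⬝ᵥ (N *ᵥ x) := by
        rw [hNq x, hBq x, Finset.mul_sum]
        refine Finset.sum_le_sum fun i _ => ?_
        exact mul_le_mul_of_nonneg_right (hCinv_le i) (mul_self_nonneg _)
      calc (0:ℝ) < C⁻¹ * (x ⬝ᵥ ((Bᵀ * B) *ᵥ x)) := by positivity
        _ ≤ x ⬝ᵥ (N *ᵥ x) := h2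
  have hNim : N⁻¹ * N = 1 :=
    Matrix.nonsing_inv_mul N ((Matrix.isUnit_iff_isUnit_det N).mp hNpd.isUnit)
  have hNisym : (N⁻¹)ᵀ = N⁻¹ := lb_inv_symm hNsym
  have hNinnn : ∀ x, 0 ≤ x ⬝ᵥ (N⁻¹ *ᵥ x) := by
    intro x
    have h := hNpd.inv.posSemidef.dotProduct_mulVec_nonneg x
    simpa using h
  -- nonnegativity of P and Q
  have hPnn : ∀ i, 0 ≤ P i := fun i => by
    rw [hPf i]; exact div_nonneg (hMinnn _) hdR.le
  have hQnn : ∀ i, 0 ≤ Q i := fun i => by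
    rw [hQf i]; exact div_nonneg (hNinnn _) hdR.le
  -- the sums of P and Q are 1
  have hPsum : ∑ i, P i = 1 := by
    have h1 : ∑ i, P i = (∑ i, As i ⬝ᵥ (M⁻¹ *ᵥ As i)) / d := by
      rw [Finset.sum_div]
      exact Finset.sum_congr rfl fun i _ => hPf i
    rw [h1, sum_rows_quad As M⁻¹, ← hMdef, hMim, Matrix.trace_one]
    simp only [Fintype.card_fin]
    exact div_self hdR.ne'
  have hQsum : ∑ i, Q i = 1 := by
    have h1 : ∑ i, Q i = (∑ i, Bs i ⬝ᵥ (N⁻¹ *ᵥ Bs i)) / d := by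
      rw [Finset.sum_div]
      exact Finset.sum_congr rfl fun i _ => hQf i
    rw [h1, sum_rows_quad Bs N⁻¹, ← hNdef, hNim, Matrix.trace_one]
    simp only [Fintype.card_fin]
    exact div_self hdR.ne'
  -- Hellinger is dominated by the absolute sum
  have hHle : ∑ i, (Real.sqrt (P i) - Real.sqrt (Q i)) ^ 2 ≤ ∑ i, |P i - Q i| :=
    Finset.sum_le_sum fun i _ => sqrt_sub_sq_le_abs (hPnn i) (hQnn i)
  -- it suffices to bound TV
  suffices hTV : (1 / 2) * ∑ i, |P i - Q i| ≤ 4 * ε * C / (c * δ) by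
    refine ⟨hTV, le_trans ?_ hTV⟩
    have := mul_le_mul_of_nonneg_left hHle (by norm_num : (0:ℝ) ≤ 1/2)
    linarith
  by_cases hbig : c * δ ≤ 4 * ε * C
  · -- trivial regime: the right-hand side is at least 1
    have hT2 : ∑ i, |P i - Q i| ≤ ∑ i, (P i + Q i) := by
      refine Finset.sum_le_sum fun i _ => ?_
      exact abs_le.2 ⟨by linarith [hPnn i, hQnn i], by linarith [hPnn i, hQnn i]⟩
    have hT3 : ∑ i, (P i + Q i) = 2 := by
      rw [Finset.sum_add_distrib, hPsum, hQsum]; norm_num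
    have h1 : (1:ℝ) ≤ 4 * ε * C / (c * δ) := by
      rw [le_div_iff₀ (by positivity)]; linarith
    linarith
  · push_neg at hbig
    -- quantitative regime
    have hr0 : 0 ≤ ε * C / (c * δ) := div_nonneg (mul_nonneg hε0 hC.le)
      (mul_nonneg hc.le hδ.le)
    have hepsc : ε / c ≤ δ / C / 4 := by
      rw [div_div, div_le_div_iff₀ hc (by positivity)]
      nlinarith
    -- N ⪰ (δ/(2C)) I
    have hNlb : ∀ x : Fin d → ℝ, (δ / C / 2) * (x ⬝ᵥ x) ≤ x ⬝ᵥ (N *ᵥ x) := by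
      intro x
      have h1 := habsgram x x
      have h2 : nrm x * nrm x = x ⬝ᵥ x := by rw [← nrm_sq x, sq]
      rw [h2] at h1
      have h3 := (abs_le.mp h1).1
      have h4 : (ε / c) * (x ⬝ᵥ x) ≤ (δ / C / 4) * (x ⬝ᵥ x) :=
        mul_le_mul_of_nonneg_right hepsc (dot_self_nonneg x)
      have h5 := hMlb x
      have h6 := dot_self_nonneg x
      nlinarith [mul_nonneg (le_of_lt (show (0:ℝ) < δ / C / 4 by positivity)) h6]
    have hα2 : (0:ℝ) < δ / C / 2 := by positivity
    have hval : (δ / C / 2)⁻¹ = 2 * C / δ := by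
      rw [div_div, inv_div]; ring
    have hNNi : N * N⁻¹ = 1 := lb_mul_inv hNsym hα2 hNlb
    -- the resolvent identity
    have hMNid : M⁻¹ * (N - M) * N⁻¹ = M⁻¹ - N⁻¹ := by
      calc M⁻¹ * (N - M) * N⁻¹ = (M⁻¹ * N - M⁻¹ * M) * N⁻¹ := by rw [Matrix.mul_sub]
        _ = M⁻¹ * (N * N⁻¹) - (M⁻¹ * M) * N⁻¹ := by
            rw [Matrix.sub_mul, Matrix.mul_assoc]
        _ = M⁻¹ - N⁻¹ := by rw [hNNi, hMim, Matrix.mul_one, Matrix.one_mul]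
    have hkey1 : ∀ x : Fin d → ℝ, x ⬝ᵥ (M⁻¹ *ᵥ x) - x ⬝ᵥ (N⁻¹ *ᵥ x)
        = (M⁻¹ *ᵥ x) ⬝ᵥ (N *ᵥ (N⁻¹ *ᵥ x)) - (M⁻¹ *ᵥ x) ⬝ᵥ (M *ᵥ (N⁻¹ *ᵥ x)) := by
      intro x
      have h1 : x ⬝ᵥ (M⁻¹ *ᵥ x) - x ⬝ᵥ (N⁻¹ *ᵥ x) = x ⬝ᵥ ((M⁻¹ - N⁻¹) *ᵥ x) := by
        rw [Matrix.sub_mulVec, dotProduct_sub]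
      rw [h1, ← hMNid, ← Matrix.mulVec_mulVec, ← Matrix.mulVec_mulVec,
        dot_symm_move hMisym, Matrix.sub_mulVec, dotProduct_sub]
    set p : Fin n → ℝ := fun i => As i ⬝ᵥ (M⁻¹ *ᵥ As i) with hpdef
    set q : Fin n → ℝ := fun i => As i ⬝ᵥ (N⁻¹ *ᵥ As i) with hqdef
    set q' : Fin n → ℝ := fun i => Bs i ⬝ᵥ (N⁻¹ *ᵥ Bs i) with hq'def
    have hpsum : ∑ i, p i = d := by
      show ∑ i, As i ⬝ᵥ (M⁻¹ *ᵥ As i) = (d : ℝ)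
      rw [sum_rows_quad As M⁻¹, ← hMdef, hMim, Matrix.trace_one, Fintype.card_fin]
    have hq'sum : ∑ i, q' i = d := by
      show ∑ i, Bs i ⬝ᵥ (N⁻¹ *ᵥ Bs i) = (d : ℝ)
      rw [sum_rows_quad Bs N⁻¹, ← hNdef, hNim, Matrix.trace_one, Fintype.card_fin]
    -- the second perturbation term
    have ht2 : ∀ i, |q i - q' i| ≤ c⁻¹ * ((2 * C / δ) * (2 * e i)) := by
      intro i
      have hsm : ∀ (G : Matrix (Fin d) (Fin d) ℝ) (r : ℝ) (x : Fin d → ℝ),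
          (r • x) ⬝ᵥ (G *ᵥ (r • x)) = r ^ 2 * (x ⬝ᵥ (G *ᵥ x)) := by
        intro G r x
        rw [smul_dotProduct, Matrix.mulVec_smul, dotProduct_smul, smul_eq_mul, smul_eq_mul]
        ring
      have hqi : q i = ((s i)⁻¹) ^ 2 * (A i ⬝ᵥ (N⁻¹ *ᵥ A i)) := by
        show As i ⬝ᵥ (N⁻¹ *ᵥ As i) = _
        rw [hAsrow i, hsm]
      have hq'i : q' i = ((s i)⁻¹) ^ 2 * (B i ⬝ᵥ (N⁻¹ *ᵥ B i)) := by
        show Bs i ⬝ᵥ (N⁻¹ *ᵥ Bs i) = _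
        rw [hBsrow i, hsm]
      have hpol : A i ⬝ᵥ (N⁻¹ *ᵥ A i) - B i ⬝ᵥ (N⁻¹ *ᵥ B i)
          = -((B i + A i) ⬝ᵥ (N⁻¹ *ᵥ (B i - A i))) := by
        rw [polarization hNisym]; ring
      have hinner : |(B i + A i) ⬝ᵥ (N⁻¹ *ᵥ (B i - A i))|
          ≤ (2 * C / δ) * (2 * e i) := by
        have h1 : |(B i + A i) ⬝ᵥ (N⁻¹ *ᵥ (B i - A i))|
            ≤ nrm (B i + A i) * nrm (N⁻¹ *ᵥ (B i - A i)) := abs_dot_le _ _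
        have h2 : nrm (N⁻¹ *ᵥ (B i - A i)) ≤ nrm (B i - A i) / (δ / C / 2) :=
          lb_inv_nrm_le hNsym hα2 hNlb _
        have h3 : nrm (B i + A i) * nrm (B i - A i) ≤ 2 * e i :=
          nrm_mul_nrm_le_two_opnorm (A i) (B i) (he0 i) (habsF i)
        have h4 : nrm (B i + A i) * (nrm (B i - A i) / (δ / C / 2))
            = (nrm (B i + A i) * nrm (B i - A i)) * (2 * C / δ) := by
          rw [div_eq_mul_inv, hval]
          ring
        calc |(B i + A i) ⬝ᵥ (N⁻¹ *ᵥ (B i - A i))|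
            ≤ nrm (B i + A i) * nrm (N⁻¹ *ᵥ (B i - A i)) := h1
          _ ≤ nrm (B i + A i) * (nrm (B i - A i) / (δ / C / 2)) :=
              mul_le_mul_of_nonneg_left h2 (nrm_nonneg _)
          _ = (nrm (B i + A i) * nrm (B i - A i)) * (2 * C / δ) := h4
          _ ≤ (2 * e i) * (2 * C / δ) :=
              mul_le_mul_of_nonneg_right h3 (by positivity)
          _ = (2 * C / δ) * (2 * e i) := by ring
      have hs2 : ((s i)⁻¹) ^ 2 = (s i ^ 2)⁻¹ := by rw [inv_pow]
      rw [hqi, hq'i, ← mul_sub, hpol]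
      rw [abs_mul, abs_neg]
      rw [hs2, abs_of_nonneg (by positivity : (0:ℝ) ≤ (s i ^ 2)⁻¹)]
      exact mul_le_mul (hcinv_ge i) hinner (abs_nonneg _) (by positivity)
    have hEb : ∑ i, c⁻¹ * ((2 * C / δ) * (2 * e i)) = 4 * (ε * C / (c * δ)) := by
      have h1 : ∀ i, c⁻¹ * ((2 * C / δ) * (2 * e i)) = (4 * C / (c * δ)) * e i := by
        intro i; field_simp; ring
      rw [Finset.sum_congr rfl fun i _ => h1 i, ← Finset.mul_sum, ← hε']
      field_simp
    have h41 : 4 * (ε * C / (c * δ)) ≤ 1 := by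
      rw [show 4 * (ε * C / (c * δ)) = 4 * ε * C / (c * δ) by ring,
        div_le_one (by positivity)]
      linarith
    have hqsum : ∑ i, q i ≤ 2 * d := by
      have h1 : ∑ i, q i ≤ ∑ i, q' i + ∑ i, |q i - q' i| := by
        rw [← Finset.sum_add_distrib]
        refine Finset.sum_le_sum fun i _ => ?_
        have := le_abs_self (q i - q' i)
        linarith
      have h2 : ∑ i, |q i - q' i| ≤ 4 * (ε * C / (c * δ)) := by
        rw [← hEb]
        exact Finset.sum_le_sum fun i _ => ht2 i
      rw [hq'sum] at h1
      linarith
    -- Cauchy–Schwarz for the first perturbation term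
    set X := ∑ i, nrm (M⁻¹ *ᵥ As i) * nrm (N⁻¹ *ᵥ As i) with hXdef
    have hXnn : 0 ≤ X :=
      Finset.sum_nonneg fun i _ => mul_nonneg (nrm_nonneg _) (nrm_nonneg _)
    have hX2 : X ^ 2 ≤ (∑ i, nrm (M⁻¹ *ᵥ As i) ^ 2) * (∑ i, nrm (N⁻¹ *ᵥ As i) ^ 2) :=
      Finset.sum_mul_sq_le_sq_mul_sq univ _ _
    have hXa : ∑ i, nrm (M⁻¹ *ᵥ As i) ^ 2 ≤ (d : ℝ) * (C / δ) := by
      calc ∑ i, nrm (M⁻¹ *ᵥ As i) ^ 2 ≤ ∑ i, p i / (δ / C) := by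
            refine Finset.sum_le_sum fun i _ => ?_
            rw [nrm_sq]
            exact lb_inv_sqnorm_le hMsym hα hMlb (As i)
        _ = (∑ i, p i) / (δ / C) := by rw [Finset.sum_div]
        _ = (d : ℝ) * (C / δ) := by
            rw [hpsum, div_eq_mul_inv, inv_div]
    have hXb : ∑ i, nrm (N⁻¹ *ᵥ As i) ^ 2 ≤ (2 * d) * (2 * C / δ) := by
      calc ∑ i, nrm (N⁻¹ *ᵥ As i) ^ 2 ≤ ∑ i, q i / (δ / C / 2) := by
            refine Finset.sum_le_sum fun i _ => ?_
            rw [nrm_sq]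
            exact lb_inv_sqnorm_le hNsym hα2 hNlb (As i)
        _ = (∑ i, q i) / (δ / C / 2) := by rw [Finset.sum_div]
        _ = (∑ i, q i) * (2 * C / δ) := by rw [div_eq_mul_inv, hval]
        _ ≤ (2 * d) * (2 * C / δ) :=
            mul_le_mul_of_nonneg_right hqsum (by positivity)
    have hXle : X ≤ 2 * d * C / δ := by
      have hy : (0:ℝ) ≤ 2 * d * C / δ := by positivity
      have h1 : X ^ 2 ≤ (2 * d * C / δ) ^ 2 := by
        calc X ^ 2 ≤ (∑ i, nrm (M⁻¹ *ᵥ As i) ^ 2) * (∑ i, nrm (N⁻¹ *ᵥ As i) ^ 2) := hX2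
          _ ≤ ((d : ℝ) * (C / δ)) * ((2 * d) * (2 * C / δ)) := by
              refine mul_le_mul hXa hXb ?_ ?_
              · exact Finset.sum_nonneg fun i _ => sq_nonneg _
              · positivity
          _ = (2 * d * C / δ) ^ 2 := by field_simp
      nlinarith
    -- first perturbation term
    have ht1 : ∀ i, |p i - q i| ≤ (ε / c) * (nrm (M⁻¹ *ᵥ As i) * nrm (N⁻¹ *ᵥ As i)) := by
      intro i
      show |As i ⬝ᵥ (M⁻¹ *ᵥ As i) - As i ⬝ᵥ (N⁻¹ *ᵥ As i)| ≤ _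
      rw [hkey1 (As i)]
      exact habsgram _ _
    have hsum1 : ∑ i, |p i - q i| ≤ (ε / c) * (2 * d * C / δ) := by
      calc ∑ i, |p i - q i|
          ≤ ∑ i, (ε / c) * (nrm (M⁻¹ *ᵥ As i) * nrm (N⁻¹ *ᵥ As i)) :=
            Finset.sum_le_sum fun i _ => ht1 i
        _ = (ε / c) * X := by rw [hXdef, Finset.mul_sum]
        _ ≤ (ε / c) * (2 * d * C / δ) :=
            mul_le_mul_of_nonneg_left hXle (by positivity)
    have hsum1' : (ε / c) * (2 * d * C / δ) = 2 * d * (ε * C / (c * δ)) := by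
      field_simp
    -- total bound
    have htot : ∑ i, |P i - Q i| ≤ 6 * (ε * C / (c * δ)) := by
      have h1 : ∀ i, |P i - Q i| = |p i - q' i| / d := by
        intro i
        rw [hPf i, hQf i, div_sub_div_same, abs_div, abs_of_pos hdR]
      have h2 : ∑ i, |p i - q' i| ≤ ∑ i, |p i - q i| + ∑ i, |q i - q' i| := by
        rw [← Finset.sum_add_distrib]
        exact Finset.sum_le_sum fun i _ => abs_sub_le _ _ _
      have h3 : ∑ i, |q i - q' i| ≤ 4 * (ε * C / (c * δ)) := by
        rw [← hEb]
        exact Finset.sum_le_sum fun i _ => ht2 i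
      have h4 : ∑ i, |p i - q' i| ≤ 6 * d * (ε * C / (c * δ)) := by
        have h5 : 4 * (ε * C / (c * δ)) ≤ 4 * d * (ε * C / (c * δ)) := by
          nlinarith
        rw [hsum1'] at hsum1
        nlinarith
      calc ∑ i, |P i - Q i| = (∑ i, |p i - q' i|) / d := by
            rw [Finset.sum_div]
            exact Finset.sum_congr rfl fun i _ => h1 i
        _ ≤ (6 * d * (ε * C / (c * δ))) / d := by
            exact div_le_div_of_nonneg_right h4 hdR.le
        _ = 6 * (ε * C / (c * δ)) := by
            rw [show 6 * (d:ℝ) * (ε * C / (c * δ)) = 6 * (ε * C / (c * δ)) * d by ring,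
              mul_div_assoc, div_self hdR.ne', mul_one]
    have hfinal : 6 * (ε * C / (c * δ)) ≤ 2 * (4 * ε * C / (c * δ)) := by
      have : 4 * ε * C / (c * δ) = 4 * (ε * C / (c * δ)) := by ring
      rw [this]
      linarith
    linarith
end

section
/- Let A, M ∈ ℝ^{n×d} and s ∈ (ℝ∖{0})ⁿ, with A_s = S^{−1}A and M_s = S^{−1}M where S = Diag(s), and suppose A_sᵀA_s is invertible. Fix i ∈ [n]. For ε ∈ ℝ let X_ε = A_s + ε·M_s, and let ℓ_i(ε) = (X_ε(X_εᵀX_ε)^{−1}X_εᵀ)_{ii} (defined for ε in a neighborhood of 0). Then ε ↦ ℓ_i(ε) is differentiable at ε = 0 with derivative 2·((I_n − Π)·M_s(A_sᵀA_s)^{−1}A_sᵀ)_{ii}, where Π = A_s(A_sᵀA_s)^{−1}A_sᵀ. -/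
open Matrix

section Aux

attribute [local instance] Matrix.linftyOpNormedAddCommGroup Matrix.linftyOpNormedSpace
  Matrix.linftyOpNormedRing Matrix.linftyOpNormedAlgebra

noncomputable def entryCLM {d : ℕ} (j k : Fin d) : Matrix (Fin d) (Fin d) ℝ →L[ℝ] ℝ :=
  LinearMap.toContinuousLinearMap
    { toFun := fun A => A j k
      map_add' := fun _ _ => rfl
      map_smul' := fun _ _ => rfl }

theorem inv_entry_hasDerivAt {d : ℕ} (G : ℝ → Matrix (Fin d) (Fin d) ℝ)
    (G' : Matrix (Fin d) (Fin d) ℝ) (hG : HasDerivAt G G' 0) (hu : IsUnit (G 0)) (j k : Fin d) :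
    HasDerivAt (fun ε => (G ε)⁻¹ j k) ((-((G 0)⁻¹ * G' * (G 0)⁻¹)) j k) 0 := by
  have hval : (↑hu.unit⁻¹ : Matrix (Fin d) (Fin d) ℝ) = (G 0)⁻¹ := by
    rw [Matrix.nonsing_inv_eq_ringInverse]
    conv_rhs => rw [← hu.unit_spec]
    rw [Ring.inverse_unit]
  have h1 : HasFDerivAt Ring.inverse
      (-ContinuousLinearMap.mulLeftRight ℝ _ (↑hu.unit⁻¹) (↑hu.unit⁻¹)) (G 0) := by
    have := hasFDerivAt_ringInverse (𝕜 := ℝ) hu.unit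
    rwa [hu.unit_spec] at this
  have h2 : HasDerivAt (fun ε => Ring.inverse (G ε))
      (-((G 0)⁻¹ * G' * (G 0)⁻¹)) 0 := by
    have := h1.comp_hasDerivAt 0 hG
    simp [hval, ContinuousLinearMap.mulLeftRight_apply] at this
    exact this
  have h3 := (entryCLM j k).hasFDerivAt.comp_hasDerivAt 0 h2
  have h4 : (fun ε => entryCLM j k (Ring.inverse (G ε))) = fun ε => (G ε)⁻¹ j k := by
    funext ε
    simp [entryCLM, Matrix.nonsing_inv_eq_ringInverse]
    rfl
  rw [Function.comp_def, h4] at h3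
  exact h3

/-- Derivative at `ε = 0` of the leverage score of row `i` of the perturbed
matrix `A_s + ε·M_s`. -/
theorem leverage_score_perturbation_hasDerivAt
    (n d : ℕ)
    (A M : Matrix (Fin n) (Fin d) ℝ)
    (s : Fin n → ℝ) (hs : ∀ i, s i ≠ 0)
    (As Ms : Matrix (Fin n) (Fin d) ℝ)
    (hAs : As = (Matrix.diagonal s)⁻¹ * A)
    (hMs : Ms = (Matrix.diagonal s)⁻¹ * M)
    (hinv : IsUnit (Asᵀ * As))
    (i : Fin n) :
    HasDerivAt
      (fun ε : ℝ =>
        ((As + ε • Ms) * (((As + ε • Ms)ᵀ * (As + ε • Ms))⁻¹) * (As + ε • Ms)ᵀ) i i)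
      (2 * ((((1 : Matrix (Fin n) (Fin n) ℝ) - As * (Asᵀ * As)⁻¹ * Asᵀ) *
          (Ms * (Asᵀ * As)⁻¹ * Asᵀ)) i i))
      0 := by
  classical
  set G0 : Matrix (Fin d) (Fin d) ℝ := Asᵀ * As with hG0def
  set Gd : Matrix (Fin d) (Fin d) ℝ := Msᵀ * As + Asᵀ * Ms with hGddef
  set Hd : Matrix (Fin d) (Fin d) ℝ := -(G0⁻¹ * Gd * G0⁻¹) with hHddef
  -- the Gram matrix function and its derivative
  have hGfun : HasDerivAt (fun ε : ℝ => (As + ε • Ms)ᵀ * (As + ε • Ms)) Gd 0 := by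
    have h : (fun ε : ℝ => (As + ε • Ms)ᵀ * (As + ε • Ms))
        = fun ε : ℝ => G0 + ε • Gd + (ε * ε) • (Msᵀ * Ms) := by
      funext ε
      simp only [transpose_add, transpose_smul, Matrix.add_mul, Matrix.mul_add,
        Matrix.smul_mul, Matrix.mul_smul, smul_smul, smul_add, hG0def, hGddef]
      abel
    rw [h]
    have h1 : HasDerivAt (fun ε : ℝ => ε • Gd) Gd 0 := by
      have := (hasDerivAt_id (0 : ℝ)).smul_const Gd
      simp at this
      exact this
    have h2 : HasDerivAt (fun ε : ℝ => (ε * ε) • (Msᵀ * Ms))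
        (0 : Matrix (Fin d) (Fin d) ℝ) 0 := by
      have := ((hasDerivAt_id (0 : ℝ)).mul (hasDerivAt_id 0)).smul_const (Msᵀ * Ms)
      simp at this
      exact this
    have := ((hasDerivAt_const (0 : ℝ) G0).fun_add h1).fun_add h2
    simp at this
    exact this
  have hG0 : (fun ε : ℝ => (As + ε • Ms)ᵀ * (As + ε • Ms)) 0 = G0 := by
    simp [hG0def]
  have hu : IsUnit ((fun ε : ℝ => (As + ε • Ms)ᵀ * (As + ε • Ms)) 0) := by
    rw [hG0]; exact hinv
  have key : ∀ j k, HasDerivAt (fun ε : ℝ => ((As + ε • Ms)ᵀ * (As + ε • Ms))⁻¹ j k)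
      (Hd j k) 0 := by
    intro j k
    have h := inv_entry_hasDerivAt _ Gd hGfun hu j k
    rw [hHddef, hG0def]
    simpa using h
  have fX : ∀ j, HasDerivAt (fun ε : ℝ => As i j + ε * Ms i j) (Ms i j) 0 := by
    intro j
    simpa using (hasDerivAt_const (0 : ℝ) (As i j)).fun_add
      ((hasDerivAt_id (0 : ℝ)).mul_const (Ms i j))
  -- rewrite the function entrywise
  have hfun : (fun ε : ℝ =>
        ((As + ε • Ms) * (((As + ε • Ms)ᵀ * (As + ε • Ms))⁻¹) * (As + ε • Ms)ᵀ) i i)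
      = fun ε : ℝ => ∑ k, (∑ j, (As i j + ε * Ms i j) *
          ((As + ε • Ms)ᵀ * (As + ε • Ms))⁻¹ j k) * (As i k + ε * Ms i k) := by
    funext ε
    simp [Matrix.mul_apply, Matrix.add_apply, Matrix.smul_apply, smul_eq_mul,
      Finset.sum_mul]
  set D : ℝ := ∑ k, ∑ j, (Ms i j * G0⁻¹ j k * As i k + As i j * Hd j k * As i k
      + As i j * G0⁻¹ j k * Ms i k) with hDdef
  have main : HasDerivAt (fun ε : ℝ =>
        ((As + ε • Ms) * (((As + ε • Ms)ᵀ * (As + ε • Ms))⁻¹) * (As + ε • Ms)ᵀ) i i) D 0 := by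
    rw [hfun, hDdef]
    apply HasDerivAt.fun_sum
    intro k _
    have hterm : ∀ j, HasDerivAt (fun ε : ℝ => (As i j + ε * Ms i j) *
        ((As + ε • Ms)ᵀ * (As + ε • Ms))⁻¹ j k)
        (Ms i j * G0⁻¹ j k + As i j * Hd j k) 0 := by
      intro j
      have := (fX j).fun_mul (key j k)
      simpa [hG0def] using this
    have hsum : HasDerivAt (fun ε : ℝ => ∑ j, (As i j + ε * Ms i j) *
        ((As + ε • Ms)ᵀ * (As + ε • Ms))⁻¹ j k)
        (∑ j, (Ms i j * G0⁻¹ j k + As i j * Hd j k)) 0 :=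
      HasDerivAt.fun_sum fun j _ => hterm j
    have := hsum.fun_mul (fX k)
    refine this.congr_deriv ?_
    symm
    simp only [zero_smul, add_zero, zero_mul]
    rw [hG0def]
    rw [Finset.sum_mul, Finset.sum_mul, ← Finset.sum_add_distrib]
    refine Finset.sum_congr rfl fun j _ => ?_
    ring
  -- identify the derivative
  have hGsymm : G0⁻¹ᵀ = G0⁻¹ := by
    rw [Matrix.transpose_nonsing_inv]
    congr 1
    simp [hG0def, transpose_mul]
  have hD : D = 2 * ((((1 : Matrix (Fin n) (Fin n) ℝ) - As * G0⁻¹ * Asᵀ) *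
      (Ms * G0⁻¹ * Asᵀ)) i i) := by
    have hDm : D = (Ms * G0⁻¹ * Asᵀ) i i + (As * Hd * Asᵀ) i i
        + (As * G0⁻¹ * Msᵀ) i i := by
      rw [hDdef]
      simp only [Matrix.mul_apply, transpose_apply, Finset.sum_mul, Finset.sum_add_distrib]
    set P : Matrix (Fin n) (Fin n) ℝ := Ms * G0⁻¹ * Asᵀ with hP
    set Q : Matrix (Fin n) (Fin n) ℝ := As * G0⁻¹ * Msᵀ with hQ
    set Pi : Matrix (Fin n) (Fin n) ℝ := As * G0⁻¹ * Asᵀ with hPi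
    have hPisymm : Piᵀ = Pi := by
      simp [hPi, transpose_mul, hGsymm, Matrix.mul_assoc]
    have hQT : Qᵀ = P := by
      rw [hQ, hP]
      simp [transpose_mul, hGsymm, Matrix.mul_assoc]
    have hQP : Q i i = P i i := by rw [← hQT, transpose_apply]
    have hmid : As * Hd * Asᵀ = -(Q * Pi) - Pi * P := by
      rw [hHddef, hGddef, hQ, hPi, hP]
      rw [mul_add]
      simp only [Matrix.mul_assoc, Matrix.neg_mul, Matrix.mul_neg, Matrix.add_mul,
        Matrix.mul_add]
      abel
    have hQPiT : (Q * Pi)ᵀ = Pi * P := by rw [transpose_mul, hPisymm, hQT]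
    have hQPi : (Q * Pi) i i = (Pi * P) i i := by rw [← hQPiT, transpose_apply]
    rw [hDm, hmid, hQP]
    simp only [Matrix.sub_apply, Matrix.neg_apply, Matrix.sub_mul, Matrix.one_mul,
      Matrix.add_apply]
    rw [hQPi]
    ring
  rw [hD] at main
  exact main

end Aux
end

section
/- There exists an absolute constant K > 0 such that for all n ≥ 2 and all t ∈ ℝ with |t| ≤ 1, the following holds: let a = 0 ∈ ℝⁿ and b = t·e_1 ∈ ℝⁿ (so b_1 = t and b_j = 0 for j ≥ 2). Then H²(softmax(a), softmax(b)) ≤ K·t²/n. -/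
open Real Finset

lemma sqrt_sub_sqrt_sq_le (x y : ℝ) (hx : 0 < x) (hy : 0 ≤ y) :
    (Real.sqrt x - Real.sqrt y) ^ 2 ≤ (x - y) ^ 2 / x := by
  have hu : 0 < Real.sqrt x := Real.sqrt_pos.mpr hx
  have hv : 0 ≤ Real.sqrt y := Real.sqrt_nonneg y
  rw [le_div_iff₀ hx]
  have h1 : (x - y) ^ 2 = ((Real.sqrt x - Real.sqrt y) * (Real.sqrt x + Real.sqrt y)) ^ 2 := by
    have := Real.sq_sqrt hx.le
    have := Real.sq_sqrt hy
    nlinarith [Real.sq_sqrt hx.le, Real.sq_sqrt hy]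
  rw [h1]
  have h2 : x = (Real.sqrt x) ^ 2 := (Real.sq_sqrt hx.le).symm
  calc (Real.sqrt x - Real.sqrt y) ^ 2 * x
      = (Real.sqrt x - Real.sqrt y) ^ 2 * (Real.sqrt x) ^ 2 := by rw [← h2]
    _ ≤ (Real.sqrt x - Real.sqrt y) ^ 2 * (Real.sqrt x + Real.sqrt y) ^ 2 := by
        apply mul_le_mul_of_nonneg_left _ (sq_nonneg _)
        apply pow_le_pow_left₀ hu.le (by linarith) 2
    _ = _ := by ring

set_option maxHeartbeats 1000000 in
/-- There is an absolute constant `K > 0` such that for `n ≥ 2` and `|t| ≤ 1`,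
the squared Hellinger distance between the uniform distribution `softmax(0)`
and `softmax(t·e₁)` is at most `K·t²/n`. -/
theorem hellinger_sq_softmax_single_coordinate :
    ∃ K : ℝ, 0 < K ∧
      ∀ (n : ℕ) (hn : 2 ≤ n),
      ∀ t : ℝ, |t| ≤ 1 →
      ∀ a b : Fin n → ℝ,
        a = 0 →
        (∀ i : Fin n, b i = if i = (⟨0, by omega⟩ : Fin n) then t else 0) →
        (1 / 2) * ∑ i, (Real.sqrt (Real.exp (a i) / ∑ j, Real.exp (a j)) -
            Real.sqrt (Real.exp (b i) / ∑ j, Real.exp (b j))) ^ 2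
          ≤ K * t ^ 2 / n := by
  refine ⟨4, by norm_num, ?_⟩
  intro n hn t ht a b ha hb
  subst ha
  set i0 : Fin n := ⟨0, by omega⟩ with hi0
  have hnR : (1:ℝ) ≤ (n:ℝ) - 1 := by
    have : (2:ℝ) ≤ n := by exact_mod_cast hn
    linarith
  have hn0 : (0:ℝ) < n := by linarith
  set e := Real.exp t with he
  set S : ℝ := e + ((n:ℝ) - 1) with hSdef
  have hepos : 0 < e := Real.exp_pos t
  have hSpos : 0 < S := by rw [hSdef]; linarith
  have hSge : (n:ℝ) - 1 ≤ S := by rw [hSdef]; linarith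
  have hsa : ∑ j, Real.exp ((0 : Fin n → ℝ) j) = (n:ℝ) := by simp
  have hexpb : ∀ i : Fin n, Real.exp (b i) = if i = i0 then e else 1 := by
    intro i; rw [hb i]; split <;> simp [he]
  have hsb : ∑ j, Real.exp (b j) = S := by
    calc ∑ j, Real.exp (b j) = ∑ j : Fin n, ((if j = i0 then e - 1 else 0) + 1) := by
          refine Finset.sum_congr rfl fun j _ => ?_
          rw [hexpb j]; split <;> ring
      _ = S := by
          rw [Finset.sum_add_distrib, Finset.sum_ite_eq' Finset.univ i0]
          simp [hSdef]; ring
  simp only [hsa, hsb, Pi.zero_apply, Real.exp_zero]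
  rw [show (∑ _x : Fin n, (1:ℝ)) = (n:ℝ) by simp]
  set A := (Real.sqrt (1/(n:ℝ)) - Real.sqrt (e / S)) ^ 2 with hA
  set B := (Real.sqrt (1/(n:ℝ)) - Real.sqrt (1 / S)) ^ 2 with hB
  have hsum : ∑ i : Fin n, (Real.sqrt (1 / (n:ℝ)) - Real.sqrt (Real.exp (b i) / S)) ^ 2
      = A + ((n:ℝ) - 1) * B := by
    calc ∑ i : Fin n, (Real.sqrt (1/(n:ℝ)) - Real.sqrt (Real.exp (b i)/S)) ^ 2
        = ∑ i : Fin n, ((if i = i0 then A - B else 0) + B) := by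
          refine Finset.sum_congr rfl fun i _ => ?_
          rw [hexpb i]; split <;> simp [hA, hB]
      _ = A + ((n:ℝ)-1) * B := by
          rw [Finset.sum_add_distrib, Finset.sum_ite_eq' Finset.univ i0, Finset.sum_const]
          simp
          ring
  rw [hsum]
  set d : ℝ := e - 1 with hd
  have hd2 : d ^ 2 ≤ 4 * t ^ 2 := by
    have h1 : |Real.exp t - 1| ≤ 2 * |t| := Real.abs_exp_sub_one_le ht
    have h2 : d ^ 2 = |Real.exp t - 1| ^ 2 := by rw [sq_abs, hd, he]
    have h3 : |Real.exp t - 1| ^ 2 ≤ (2 * |t|) ^ 2 :=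
      pow_le_pow_left₀ (abs_nonneg _) h1 2
    have h4 : (2 * |t|) ^ 2 = 4 * t ^ 2 := by rw [mul_pow, sq_abs]; ring
    linarith
  have hAle : A ≤ d ^ 2 / (n:ℝ) := by
    have h1 := sqrt_sub_sqrt_sq_le (1/(n:ℝ)) (e/S) (by positivity) (by positivity)
    have h2 : (1/(n:ℝ) - e/S) ^ 2 / (1/(n:ℝ)) = (((n:ℝ)-1)^2 * d^2) / ((n:ℝ) * S^2) := by
      rw [hd, hSdef]
      field_simp
      ring
    have h3 : A ≤ (((n:ℝ)-1)^2 * d^2) / ((n:ℝ) * S^2) := h1.trans_eq h2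
    refine h3.trans ?_
    rw [div_le_div_iff₀ (by positivity) hn0]
    have hsq : ((n:ℝ)-1)^2 ≤ S^2 := pow_le_pow_left₀ (by linarith) hSge 2
    have hkey := mul_le_mul_of_nonneg_right hsq (by positivity : (0:ℝ) ≤ d^2 * (n:ℝ))
    nlinarith [hkey]
  have hBle : ((n:ℝ)-1) * B ≤ d ^ 2 / (n:ℝ) := by
    have h1 := sqrt_sub_sqrt_sq_le (1/(n:ℝ)) (1/S) (by positivity) (by positivity)
    have h2 : (1/(n:ℝ) - 1/S) ^ 2 / (1/(n:ℝ)) = d^2 / ((n:ℝ) * S^2) := by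
      rw [hd, hSdef]
      field_simp
      ring
    have h3 : B ≤ d^2 / ((n:ℝ) * S^2) := h1.trans_eq h2
    calc ((n:ℝ)-1) * B ≤ ((n:ℝ)-1) * (d^2 / ((n:ℝ) * S^2)) := by
          apply mul_le_mul_of_nonneg_left h3 (by linarith)
      _ ≤ d ^ 2 / (n:ℝ) := by
          rw [mul_div_assoc', div_le_div_iff₀ (by positivity) hn0]
          have hS1 : 1 ≤ S := le_trans hnR hSge
          have hSS : S ≤ S^2 := by nlinarith
          have hkey := mul_le_mul_of_nonneg_right (hSge.trans hSS)
            (by positivity : (0:ℝ) ≤ d^2 * (n:ℝ))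
          nlinarith [hkey]
  calc (1/2) * (A + ((n:ℝ)-1) * B) ≤ (1/2) * (d^2/(n:ℝ) + d^2/(n:ℝ)) := by linarith
    _ = d^2 / (n:ℝ) := by ring
    _ ≤ 4 * t^2 / (n:ℝ) := by
        gcongr
end
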